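/- arXiv:2405.00994 — 5 statements merged into one kernel-verified Lean document; each statement's English description precedes it below -/
import Mathlib

section
/- Let (h_0, h_1, ..., h_s) be an O-sequence (i.e., h_0 = 1 and 0 ≤ h_{i+1} ≤ h_i^{⟨i⟩} for all 0 ≤ i ≤ s-1, where ^{⟨i⟩} denotes the Macaulay bound) with h_1 ≤ n+1 for a positive integer n, and suppose h_s > 0. Then for every i with 0 ≤ i ≤ s, one has h_i / h_s ≥ C(n+i, i) / C(n+s, s). -/
/-- `IsMacaulayRep f i j m` says that `f = C(m i, i) + C(m (i-1), i-1) + ... + C(m (i-j), i-j)`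
is the `i`-binomial (Macaulay) representation of `f`, with
`m i > m (i-1) > ... > m (i-j) ≥ i - j ≥ 1`. -/
def IsMacaulayRep (f i j : ℕ) (m : ℕ → ℕ) : Prop :=
  j < i ∧ i - j ≤ m (i - j) ∧
  (∀ k, i - j ≤ k → k < i → m k < m (k + 1)) ∧
  f = ∑ k ∈ Finset.Icc (i - j) i, Nat.choose (m k) k

/-- Given the `i`-binomial representation data `(j, m)`, this is `f^⟨i⟩`. -/
def macaulayUpper (i j : ℕ) (m : ℕ → ℕ) : ℕ :=
  ∑ k ∈ Finset.Icc (i - j) i, Nat.choose (m k + 1) (k + 1)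

/-- Given the `i`-binomial representation data `(j, m)`, this is `f^(i)`. -/
def macaulayLower (i j : ℕ) (m : ℕ → ℕ) : ℕ :=
  ∑ k ∈ Finset.Icc (i - j) i, Nat.choose (m k) (k + 1)

/-- `MacaulayLE g f i` expresses `g ≤ f^⟨i⟩` (with the convention `0^⟨i⟩ = 0`). -/
def MacaulayLE (g f i : ℕ) : Prop :=
  (f = 0 ∧ g = 0) ∨ ∃ j m, IsMacaulayRep f i j m ∧ g ≤ macaulayUpper i j m

/-- `(h 0, h 1, ..., h s)` is an O-sequence: `h 0 = 1` and `h (i+1) ≤ (h i)^⟨i⟩`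
for each `1 ≤ i ≤ s - 1`. -/
def IsOSequence (s : ℕ) (h : ℕ → ℕ) : Prop :=
  h 0 = 1 ∧ ∀ i, 1 ≤ i → i < s → MacaulayLE (h (i + 1)) (h i) i

/-! ### Auxiliary lemmas -/

lemma chain_aux {i j : ℕ} {m : ℕ → ℕ}
    (hmono : ∀ k, i - j ≤ k → k < i → m k < m (k + 1)) :
    ∀ k l, i - j ≤ k → k ≤ l → l ≤ i → m k + (l - k) ≤ m l := by
  intro k l hk hkl
  induction l, hkl using Nat.le_induction with
  | base => intro _; omega
  | succ l hl ih =>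
    intro hli
    have h1 : m l < m (l + 1) := hmono l (by omega) (by omega)
    have h2 := ih (by omega)
    omega

lemma le_m_of_rep {f i j : ℕ} {m : ℕ → ℕ} (h : IsMacaulayRep f i j m) :
    ∀ k, i - j ≤ k → k ≤ i → k ≤ m k := by
  intro k hk hki
  have h2 := chain_aux h.2.2.1 (i - j) k (le_refl _) hk hki
  have h3 := h.2.1
  omega

lemma rep_pos {f i j : ℕ} {m : ℕ → ℕ} (h : IsMacaulayRep f i j m) :
    Nat.choose (m i) i ≤ f ∧ 0 < f := by
  have hmem : i ∈ Finset.Icc (i - j) i := Finset.mem_Icc.mpr ⟨Nat.sub_le _ _, le_refl _⟩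
  have hle : Nat.choose (m i) i ≤ ∑ k ∈ Finset.Icc (i - j) i, Nat.choose (m k) k :=
    Finset.single_le_sum (f := fun k => Nat.choose (m k) k) (fun k _ => Nat.zero_le _) hmem
  have hpos : 0 < Nat.choose (m i) i :=
    Nat.choose_pos (le_m_of_rep h i (Nat.sub_le _ _) (le_refl _))
  constructor
  · rw [h.2.2.2]; exact hle
  · rw [h.2.2.2]; exact lt_of_lt_of_le hpos hle

lemma rep_split {f i j : ℕ} {m : ℕ → ℕ} (h : IsMacaulayRep f i (j + 1) m) :
    IsMacaulayRep (∑ k ∈ Finset.Icc (i - 1 - j) (i - 1), Nat.choose (m k) k) (i - 1) j m ∧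
    f = (∑ k ∈ Finset.Icc (i - 1 - j) (i - 1), Nat.choose (m k) k) + Nat.choose (m i) i ∧
    macaulayLower i (j + 1) m = macaulayLower (i - 1) j m + Nat.choose (m i) (i + 1) := by
  obtain ⟨hji, hlow, hmono, hf⟩ := h
  have hi1 : 1 ≤ i := by omega
  have heq : i - 1 - j = i - (j + 1) := by omega
  have hsplit : ∀ (F : ℕ → ℕ), ∑ k ∈ Finset.Icc (i - (j + 1)) i, F k
      = ∑ k ∈ Finset.Icc (i - 1 - j) (i - 1), F k + F i := by
    intro F
    rw [heq]
    have : i = (i - 1) + 1 := by omega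
    rw [this, Finset.sum_Icc_succ_top (by omega)]
    congr 1
  refine ⟨⟨by omega, ?_, ?_, rfl⟩, ?_, ?_⟩
  · rw [heq]; exact hlow
  · intro k hk hki; exact hmono k (by omega) (by omega)
  · rw [hf, hsplit]
  · unfold macaulayLower
    have := hsplit (fun k => Nat.choose (m k) (k + 1))
    rw [this]

/-- `f^(i) < C(m i + 1, i + 1)`. -/
lemma lower_lt {f i j : ℕ} {m : ℕ → ℕ} (h : IsMacaulayRep f i j m) :
    macaulayLower i j m < Nat.choose (m i + 1) (i + 1) := by
  induction j generalizing f i with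
  | zero =>
    have hmi : i ≤ m i := le_m_of_rep h i (by omega) (le_refl _)
    unfold macaulayLower
    simp only [Nat.sub_zero, Finset.Icc_self, Finset.sum_singleton]
    have h2 := Nat.choose_succ_succ (m i) i
    simp only [Nat.succ_eq_add_one] at h2
    have hpos : 0 < Nat.choose (m i) i := Nat.choose_pos hmi
    omega
  | succ j ih =>
    obtain ⟨hrep', hfeq, hLeq⟩ := rep_split h
    have hi1 : 1 ≤ i := by have := h.1; omega
    have hIH := ih hrep'
    have hstep : m (i - 1) < m i := by
      have := h.2.2.1 (i - 1) (by have := h.1; omega) (by omega)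
      have hieq : i - 1 + 1 = i := by omega
      rwa [hieq] at this
    have h1 : Nat.choose (m (i - 1) + 1) (i - 1 + 1) ≤ Nat.choose (m i) i := by
      have hieq : i - 1 + 1 = i := by omega
      rw [hieq]
      exact Nat.choose_le_choose i (by omega)
    have h2 := Nat.choose_succ_succ (m i) i
    simp only [Nat.succ_eq_add_one] at h2
    omega

/-- Key estimate: `f^(i) * (i+1) ≤ f * n` when `m i + 1 ≤ n + i`. -/
lemma lower_mul {f i j : ℕ} {m : ℕ → ℕ} (n : ℕ) (h : IsMacaulayRep f i j m)
    (hmi : m i + 1 ≤ n + i) : macaulayLower i j m * (i + 1) ≤ f * n := by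
  induction j generalizing f i n with
  | zero =>
    have hmi' : i ≤ m i := le_m_of_rep h i (by omega) (le_refl _)
    unfold macaulayLower
    simp only [Nat.sub_zero, Finset.Icc_self, Finset.sum_singleton]
    rw [Nat.choose_succ_right_eq]
    have hf : f = Nat.choose (m i) i := by
      rw [h.2.2.2]; simp
    rw [hf]
    exact Nat.mul_le_mul_left _ (by omega)
  | succ j ih =>
    obtain ⟨hrep', hfeq, hLeq⟩ := rep_split h
    have hi1 : 1 ≤ i := by have := h.1; omega
    have hmi' : i ≤ m i := le_m_of_rep h i (by omega) (le_refl _)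
    set a := m i with ha
    set g := ∑ k ∈ Finset.Icc (i - 1 - j) (i - 1), Nat.choose (m k) k with hg
    set L' := macaulayLower (i - 1) j m with hL'
    obtain ⟨d, hd⟩ : ∃ d, a = i + d := ⟨a - i, by omega⟩
    have hstep : m (i - 1) < a := by
      have := h.2.2.1 (i - 1) (by have := h.1; omega) (by omega)
      have hieq : i - 1 + 1 = i := by omega
      rwa [hieq] at this
    -- IH for g with n' = d + 1
    have hIH : L' * (i - 1 + 1) ≤ g * (d + 1) := by
      apply ih (d + 1) hrep'
      omega
    have hieq : i - 1 + 1 = i := by omega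
    rw [hieq] at hIH
    -- L' ≤ C(a, i)
    have hL'le : L' ≤ Nat.choose a i := by
      have := lower_lt hrep'
      have h1 : Nat.choose (m (i - 1) + 1) (i - 1 + 1) ≤ Nat.choose a i := by
        rw [hieq]; exact Nat.choose_le_choose i (by omega)
      omega
    -- C(a, i+1)*(i+1) = C(a, i)*d
    have hch : Nat.choose a (i + 1) * (i + 1) = Nat.choose a i * d := by
      rw [Nat.choose_succ_right_eq]
      congr 1
      omega
    have hdn : d + 1 ≤ n := by omega
    rw [hLeq, hfeq]
    calc (L' + Nat.choose a (i + 1)) * (i + 1)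
        = L' * i + L' + Nat.choose a (i + 1) * (i + 1) := by ring
      _ ≤ g * (d + 1) + Nat.choose a i + Nat.choose a i * d := by
          rw [hch]; omega
      _ = (g + Nat.choose a i) * (d + 1) := by ring
      _ ≤ (g + Nat.choose a i) * n := Nat.mul_le_mul_left _ hdn
      _ = (g + Nat.choose (m i) i) * n := rfl

lemma upper_eq {f i j : ℕ} {m : ℕ → ℕ} (h : IsMacaulayRep f i j m) :
    macaulayUpper i j m = f + macaulayLower i j m := by
  unfold macaulayUpper macaulayLower
  rw [h.2.2.2, ← Finset.sum_add_distrib]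
  exact Finset.sum_congr rfl fun k _ => Nat.choose_succ_succ (m k) k

/-- Main step lemma. -/
lemma step_lemma {n i f g : ℕ} (hi : 1 ≤ i) (hf0 : 0 < f)
    (hfb : f ≤ Nat.choose (n + i) i) (hle : MacaulayLE g f i) :
    g ≤ Nat.choose (n + i + 1) (i + 1) ∧ g * (i + 1) ≤ f * (n + i + 1) := by
  rcases hle with ⟨hf, _⟩ | ⟨j, m, hrep, hg⟩
  · omega
  have hmi' : i ≤ m i := le_m_of_rep hrep i (by omega) (le_refl _)
  have htop : Nat.choose (m i) i ≤ f := (rep_pos hrep).1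
  -- m i ≤ n + i
  have hmib : m i ≤ n + i := by
    by_contra hc
    push_neg at hc
    have h1 : Nat.choose (n + i + 1) i ≤ Nat.choose (m i) i :=
      Nat.choose_le_choose i (by omega)
    have h2 : Nat.choose (n + i + 1) i
        = Nat.choose (n + i) (i - 1) + Nat.choose (n + i) i := by
      have h4 := Nat.choose_succ_succ (n + i) (i - 1)
      simp only [Nat.succ_eq_add_one] at h4
      rw [show i - 1 + 1 = i by omega] at h4
      exact h4
    have h3 : 0 < Nat.choose (n + i) (i - 1) := Nat.choose_pos (by omega)
    omega
  rcases Nat.lt_or_ge (m i) (n + i) with hlt | hge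
  · -- case m i + 1 ≤ n + i
    have hL := lower_mul n hrep (by omega)
    have hLlt := lower_lt hrep
    have hU := upper_eq hrep
    have hLle : macaulayLower i j m ≤ Nat.choose (n + i) (i + 1) := by
      have : Nat.choose (m i + 1) (i + 1) ≤ Nat.choose (n + i) (i + 1) :=
        Nat.choose_le_choose (i + 1) (by omega)
      omega
    constructor
    · have h2 := Nat.choose_succ_succ (n + i) i
      simp only [Nat.succ_eq_add_one] at h2
      omega
    · have h1 : g * (i + 1) ≤ (f + macaulayLower i j m) * (i + 1) :=
        Nat.mul_le_mul_right _ (by omega)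
      calc g * (i + 1) ≤ (f + macaulayLower i j m) * (i + 1) := h1
        _ = f * (i + 1) + macaulayLower i j m * (i + 1) := by ring
        _ ≤ f * (i + 1) + f * n := by omega
        _ = f * (n + i + 1) := by ring
  · -- case m i = n + i : then j = 0 and f = C(n+i, i)
    have hmieq : m i = n + i := by omega
    have hj0 : j = 0 := by
      by_contra hj
      obtain ⟨j', rfl⟩ : ∃ j', j = j' + 1 := ⟨j - 1, by omega⟩
      obtain ⟨hrep', hfeq, _⟩ := rep_split hrep
      have := (rep_pos hrep').2
      have : Nat.choose (n + i) i < f := by rw [hfeq, hmieq]; omega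
      omega
    subst hj0
    have hfeq : f = Nat.choose (n + i) i := by
      have := hrep.2.2.2
      simp only [Nat.sub_zero, Finset.Icc_self, Finset.sum_singleton] at this
      rw [this, hmieq]
    have hUeq : macaulayUpper i 0 m = Nat.choose (n + i + 1) (i + 1) := by
      unfold macaulayUpper
      simp only [Nat.sub_zero, Finset.Icc_self, Finset.sum_singleton]
      rw [hmieq]
    constructor
    · rw [← hUeq]; exact hg
    · have hkey : Nat.choose (n + i + 1) (i + 1) * (i + 1) = (n + i + 1) * Nat.choose (n + i) i := by
        have := Nat.add_one_mul_choose_eq (n + i) i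
        simpa using this.symm
      calc g * (i + 1) ≤ Nat.choose (n + i + 1) (i + 1) * (i + 1) := by
            rw [← hUeq] at *; exact Nat.mul_le_mul_right _ hg
        _ = (n + i + 1) * Nat.choose (n + i) i := hkey
        _ = f * (n + i + 1) := by rw [hfeq]; ring

/-- For an O-sequence `(h 0, ..., h s)` with `h 1 ≤ n + 1` and `h s > 0`,
one has `h i / h s ≥ C(n+i, i) / C(n+s, s)` for all `0 ≤ i ≤ s`. -/
theorem stmt0 (s n : ℕ) (hn : 0 < n) (h : ℕ → ℕ) (hO : IsOSequence s h)
    (h1 : h 1 ≤ n + 1) (hs : 0 < h s) :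
    ∀ i ≤ s, ((Nat.choose (n + i) i : ℚ)) / (Nat.choose (n + s) s : ℚ)
      ≤ (h i : ℚ) / (h s : ℚ) := by
  obtain ⟨h0, hMac⟩ := hO
  -- zeros propagate to the end
  have hzero : ∀ d t, t + d = s → 1 ≤ t → h t = 0 → h s = 0 := by
    intro d
    induction d with
    | zero => intro t ht _ h0'; rw [← ht]; simpa using h0'
    | succ d ih =>
      intro t ht ht1 h0'
      have hts : t < s := by omega
      rcases hMac t ht1 hts with ⟨_, hg⟩ | ⟨j, m, hrep, _⟩
      · exact ih (t + 1) (by omega) (by omega) hg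
      · exact absurd (rep_pos hrep).2 (by omega)
  -- positivity
  have hpos : ∀ t ≤ s, 0 < h t := by
    intro t hts
    by_contra hc
    push_neg at hc
    interval_cases ht : h t
    rcases Nat.eq_zero_or_pos t with rfl | ht1
    · omega
    · exact absurd (hzero (s - t) t (by omega) ht1 ht) (by omega)
  -- boundedness
  have hbound : ∀ t ≤ s, h t ≤ Nat.choose (n + t) t := by
    intro t
    induction t with
    | zero => intro _; simpa using h0.le
    | succ t ih =>
      intro hts
      rcases Nat.eq_zero_or_pos t with rfl | ht1
      · simpa using h1
      · exact (step_lemma ht1 (hpos t (by omega)) (ih (by omega))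
          (hMac t ht1 (by omega))).1
  -- ratio inequality
  have hratio : ∀ i, 1 ≤ i → ∀ t, i ≤ t → t ≤ s →
      h t * Nat.choose (n + i) i ≤ h i * Nat.choose (n + t) t := by
    intro i hi1 t hit
    induction t, hit using Nat.le_induction with
    | base => intro _; exact le_refl _
    | succ t hit ih =>
      intro hts
      have hstep := (step_lemma (by omega) (hpos t (by omega)) (hbound t (by omega))
        (hMac t (by omega) (by omega))).2
      have hIH := ih (by omega)
      have hkey : Nat.choose (n + t + 1) (t + 1) * (t + 1)
          = (n + t + 1) * Nat.choose (n + t) t := by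
        have := Nat.add_one_mul_choose_eq (n + t) t
        simpa using this.symm
      have hmain : h (t + 1) * Nat.choose (n + i) i * (t + 1)
          ≤ h i * Nat.choose (n + (t + 1)) (t + 1) * (t + 1) := by
        calc h (t + 1) * Nat.choose (n + i) i * (t + 1)
            = (h (t + 1) * (t + 1)) * Nat.choose (n + i) i := by ring
          _ ≤ (h t * (n + t + 1)) * Nat.choose (n + i) i :=
              Nat.mul_le_mul_right _ hstep
          _ = (h t * Nat.choose (n + i) i) * (n + t + 1) := by ring
          _ ≤ (h i * Nat.choose (n + t) t) * (n + t + 1) :=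
              Nat.mul_le_mul_right _ hIH
          _ = h i * ((n + t + 1) * Nat.choose (n + t) t) := by ring
          _ = h i * (Nat.choose (n + t + 1) (t + 1) * (t + 1)) := by rw [hkey]
          _ = h i * Nat.choose (n + (t + 1)) (t + 1) * (t + 1) := by
              rw [show n + (t + 1) = n + t + 1 from rfl]; ring
      exact Nat.le_of_mul_le_mul_right hmain (by omega)
  -- conclude
  intro i his
  have hcs : 0 < Nat.choose (n + s) s := Nat.choose_pos (by omega)
  rw [div_le_div_iff₀ (by exact_mod_cast hcs) (by exact_mod_cast hs)]
  have hnat : h s * Nat.choose (n + i) i ≤ h i * Nat.choose (n + s) s := by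
    rcases Nat.eq_zero_or_pos i with rfl | hi1
    · simpa [h0] using hbound s (le_refl s)
    · exact hratio i hi1 s his (le_refl s)
  calc ((Nat.choose (n + i) i : ℚ)) * (h s : ℚ)
      = ((h s * Nat.choose (n + i) i : ℕ) : ℚ) := by push_cast; ring
    _ ≤ ((h i * Nat.choose (n + s) s : ℕ) : ℚ) := by exact_mod_cast hnat
    _ = (h i : ℚ) * (Nat.choose (n + s) s : ℚ) := by push_cast; ring
end

section
/- Let n, s be positive integers and let h be a positive integer with h ≤ C(n+s-1, s-1). Then n·h ≥ s·h^{(s-1)}, where for a positive integer f with (s-1)-binomial representation f = C(n_{s-1}, s-1) + C(n_{s-2}, s-2) + ... + C(n_{s-j}, s-j), one defines f^{(s-1)} = C(n_{s-1}, s) + C(n_{s-2}, s-1) + ... + C(n_{s-j}, s-j+1). -/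
/-- `(k+1) * C(m, k+1) = (m-k) * C(m, k)` in ℕ. -/
lemma choose_succ_mul_eq (m k : ℕ) :
    (k + 1) * Nat.choose m (k + 1) = (m - k) * Nat.choose m k := by
  cases m with
  | zero =>
    simp [Nat.choose]
  | succ p =>
    have h1 := Nat.add_one_mul_choose_eq p k
    have h2 := Nat.choose_mul_succ_eq p k
    -- h1 : (p+1) * p.choose k = (p+1).choose (k+1) * (k+1)
    -- h2 : p.choose k * (p+1) = (p+1).choose k * (p+1-k)
    calc (k + 1) * Nat.choose (p + 1) (k + 1)
        = Nat.choose (p + 1) (k + 1) * (k + 1) := by ring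
      _ = (p + 1) * Nat.choose p k := h1.symm
      _ = Nat.choose p k * (p + 1) := by ring
      _ = Nat.choose (p + 1) k * (p + 1 - k) := h2
      _ = (p + 1 - k) * Nat.choose (p + 1) k := by ring

/-- `C(M'+d, r+1) ≥ C(M', r+1) + d * C(M', r)`. -/
lemma choose_add_ge (M' d r : ℕ) :
    Nat.choose M' (r + 1) + d * Nat.choose M' r ≤ Nat.choose (M' + d) (r + 1) := by
  induction d with
  | zero => simp
  | succ e ih =>
    have hmono : Nat.choose M' r ≤ Nat.choose (M' + e) r :=
      Nat.choose_le_choose r (by omega)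
    have : Nat.choose (M' + e + 1) (r + 1)
        = Nat.choose (M' + e) r + Nat.choose (M' + e) (r + 1) :=
      Nat.choose_succ_succ _ _
    have : Nat.choose (M' + e) (r + 1) + Nat.choose (M' + e) r
        ≤ Nat.choose (M' + (e + 1)) (r + 1) := by
      rw [show M' + (e + 1) = (M' + e) + 1 by ring, this]; omega
    calc Nat.choose M' (r + 1) + (e + 1) * Nat.choose M' r
        = (Nat.choose M' (r + 1) + e * Nat.choose M' r) + Nat.choose M' r := by ring
      _ ≤ Nat.choose (M' + e) (r + 1) + Nat.choose (M' + e) r := by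
          exact Nat.add_le_add ih hmono
      _ ≤ Nat.choose (M' + (e + 1)) (r + 1) := this

/-- The key step inequality. -/
lemma step_ineq (n i q M M' : ℕ) (hn : 1 ≤ n) (hri : q + 1 ≤ i)
    (hM : M + 1 ≤ n + (q + 1)) (hMr : q + 1 ≤ M) (hlt : M' < M) :
    (i + 1) * Nat.choose M' (q + 1) + (n + i - M') * Nat.choose M' q
      ≤ (n + i - M) * Nat.choose M (q + 1) + n * Nat.choose M' q := by
  set r : ℕ := q + 1 with hr
  obtain ⟨a, ha⟩ : ∃ a, n + i = M + a := ⟨n + i - M, by omega⟩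
  obtain ⟨d, hd⟩ : ∃ d, M = M' + d := ⟨M - M', by omega⟩
  have hd1 : 1 ≤ d := by omega
  have ha1 : i - q ≤ a := by omega
  have ha0 : 1 ≤ a := by omega
  have hniM : n + i - M = a := by omega
  have hniM' : n + i - M' = a + d := by omega
  rw [hniM, hniM']
  have hF1 : Nat.choose M' r + d * Nat.choose M' q ≤ Nat.choose M r := by
    rw [hd]; exact choose_add_ge M' d q
  have key : (i + 1) * Nat.choose M' r + (a + d) * Nat.choose M' q
      ≤ a * (Nat.choose M' r + d * Nat.choose M' q) + n * Nat.choose M' q := by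
    rcases le_or_gt (i + 1) a with hcase | hcase
    · -- a ≥ i+1
      have h1 : (i + 1) * Nat.choose M' r ≤ a * Nat.choose M' r :=
        Nat.mul_le_mul_right _ hcase
      have h2 : a + d ≤ a * d + n := by nlinarith
      have h3 : (a + d) * Nat.choose M' q ≤ (a * d + n) * Nat.choose M' q :=
        Nat.mul_le_mul_right _ h2
      calc (i + 1) * Nat.choose M' r + (a + d) * Nat.choose M' q
          ≤ a * Nat.choose M' r + (a * d + n) * Nat.choose M' q :=
            Nat.add_le_add h1 h3
        _ = a * (Nat.choose M' r + d * Nat.choose M' q) + n * Nat.choose M' q := by ring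
    · -- a ≤ i
      have he : i + 1 - a ≤ r := by omega
      -- r * C(M',r) = (M' - q) * C(M',q)
      have hA : r * Nat.choose M' r = (M' - q) * Nat.choose M' q := choose_succ_mul_eq M' q
      -- M' - q ≤ n - d
      have hMq : M' - q ≤ n - d := by omega
      -- (i+1-a) * C(M',r) ≤ (n-d) * C(M',q)
      have hstep : (i + 1 - a) * Nat.choose M' r ≤ (n - d) * Nat.choose M' q := by
        have h5 : r * ((i + 1 - a) * Nat.choose M' r)
            ≤ r * ((n - d) * Nat.choose M' q) := by
          calc r * ((i + 1 - a) * Nat.choose M' r)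
              = (i + 1 - a) * (r * Nat.choose M' r) := by ring
            _ = (i + 1 - a) * ((M' - q) * Nat.choose M' q) := by rw [hA]
            _ = ((i + 1 - a) * (M' - q)) * Nat.choose M' q := by ring
            _ ≤ (r * (n - d)) * Nat.choose M' q := by
                apply Nat.mul_le_mul_right
                exact Nat.mul_le_mul he hMq
            _ = r * ((n - d) * Nat.choose M' q) := by ring
        exact Nat.le_of_mul_le_mul_left h5 (by omega)
      have hsum : (n - d) + (a + d) ≤ a * d + n := by
        rcases le_or_gt d n with hdn | hdn
        · have : n - d + (a + d) = n + a := by omega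
          rw [this]
          have : a ≤ a * d := Nat.le_mul_of_pos_right a (by omega)
          omega
        · have h6 : a + d ≤ a * d + 1 := by nlinarith
          have : n - d = 0 := by omega
          omega
      have hsplitmul : (i + 1) * Nat.choose M' r
          = a * Nat.choose M' r + (i + 1 - a) * Nat.choose M' r := by
        rw [← Nat.add_mul]; congr 1; omega
      calc (i + 1) * Nat.choose M' r + (a + d) * Nat.choose M' q
          = a * Nat.choose M' r + ((i + 1 - a) * Nat.choose M' r
              + (a + d) * Nat.choose M' q) := by
            rw [hsplitmul]; ring
        _ ≤ a * Nat.choose M' r + ((n - d) * Nat.choose M' q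
              + (a + d) * Nat.choose M' q) := by
            exact Nat.add_le_add_left (Nat.add_le_add_right hstep _) _
        _ = a * Nat.choose M' r + ((n - d) + (a + d)) * Nat.choose M' q := by ring
        _ ≤ a * Nat.choose M' r + (a * d + n) * Nat.choose M' q := by
            exact Nat.add_le_add_left (Nat.mul_le_mul_right _ hsum) _
        _ = a * (Nat.choose M' r + d * Nat.choose M' q) + n * Nat.choose M' q := by ring
  calc (i + 1) * Nat.choose M' r + (a + d) * Nat.choose M' q
      ≤ a * (Nat.choose M' r + d * Nat.choose M' q) + n * Nat.choose M' q := key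
    _ ≤ a * Nat.choose M r + n * Nat.choose M' q := by
        exact Nat.add_le_add_right (Nat.mul_le_mul_left a hF1) _

/-- Chain growth: within the range, `m k + (k' - k) ≤ m k'`. -/
lemma chain_add (i j : ℕ) (m : ℕ → ℕ)
    (hchain : ∀ k, i - j ≤ k → k < i → m k < m (k + 1)) :
    ∀ k', i - j ≤ k' → k' ≤ i → ∀ k, i - j ≤ k → k ≤ k' → m k + (k' - k) ≤ m k' := by
  intro k'
  induction k' with
  | zero => intro _ _ k hk hk'; interval_cases k; simp
  | succ p ih =>
    intro hp1 hp2 k hk hkk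
    rcases Nat.lt_or_ge k (p + 1) with hlt | hge
    · have hkp : k ≤ p := by omega
      have hip : i - j ≤ p := by omega
      have h1 : m k + (p - k) ≤ m p := ih hip (by omega) k hk hkp
      have h2 : m p < m (p + 1) := hchain p hip (by omega)
      omega
    · have : k = p + 1 := by omega
      subst this; simp

/-- Main induction on the partial sums. -/
lemma key_ineq (n i j : ℕ) (m : ℕ → ℕ) (hn : 1 ≤ n) (hij : j < i)
    (hlow : i - j ≤ m (i - j))
    (hchain : ∀ k, i - j ≤ k → k < i → m k < m (k + 1))
    (htop : m i ≤ n + i) (htop' : 1 ≤ j → m i + 1 ≤ n + i) :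
    ∀ t, t ≤ j →
      (i + 1) * (∑ k ∈ Finset.Icc (i - t) i, Nat.choose (m k) (k + 1))
        + (n + i - m (i - t)) * Nat.choose (m (i - t)) (i - t)
      ≤ n * ∑ k ∈ Finset.Icc (i - t) i, Nat.choose (m k) k := by
  have hmk : ∀ k, i - j ≤ k → k ≤ i → k ≤ m k := by
    intro k hk1 hk2
    have := chain_add i j m hchain k hk1 hk2 (i - j) (le_refl _) hk1
    omega
  have hchainup : ∀ k, i - j ≤ k → k ≤ i → m k + (i - k) ≤ m i := by
    intro k hk1 hk2
    exact chain_add i j m hchain i (by omega) (le_refl _) k hk1 hk2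
  intro t
  induction t with
  | zero =>
    intro _
    simp only [Nat.sub_zero, Finset.Icc_self, Finset.sum_singleton]
    have hmi : i ≤ m i := hmk i (by omega) (le_refl _)
    rw [choose_succ_mul_eq (m i) i, ← Nat.add_mul]
    apply Nat.mul_le_mul_right
    omega
  | succ t iht =>
    intro ht1
    have ht0 : t ≤ j := by omega
    have IH := iht ht0
    -- split off the bottom term
    have hsplit : ∀ f : ℕ → ℕ,
        ∑ k ∈ Finset.Icc (i - (t + 1)) i, f k
          = f (i - (t + 1)) + ∑ k ∈ Finset.Icc (i - t) i, f k := by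
      intro f
      have h1 : i - t = (i - (t + 1)) + 1 := by omega
      rw [h1, Finset.Icc_add_one_left_eq_Ioc, ← Finset.Ioc_insert_left (by omega : i - (t+1) ≤ i),
        Finset.sum_insert (by simp)]
    rw [hsplit, hsplit]
    set r : ℕ := i - t with hrdef
    have hr1 : i - (t + 1) = r - 1 := by omega
    have hrq : r = (r - 1) + 1 := by omega
    -- bounds for step lemma
    have hjm : i - j ≤ r - 1 := by omega
    have hMr : r ≤ m r := hmk r (by omega) (by omega)
    have hlt : m (r - 1) < m r := by
      have := hchain (r - 1) hjm (by omega)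
      rwa [← hrq] at this
    have hM : m r + 1 ≤ n + r := by
      have h1 : m r + (i - r) ≤ m i := hchainup r (by omega) (by omega)
      have h2 : m i + 1 ≤ n + i := htop' (by omega)
      omega
    have hstep := step_ineq n i (r - 1) (m r) (m (r - 1)) hn (by omega)
      (by omega) (by omega) hlt
    rw [← hrq] at hstep
    rw [hr1]
    calc (i + 1) * (Nat.choose (m (r - 1)) (r - 1 + 1)
            + ∑ k ∈ Finset.Icc r i, Nat.choose (m k) (k + 1))
          + (n + i - m (r - 1)) * Nat.choose (m (r - 1)) (r - 1)
        = ((i + 1) * Nat.choose (m (r - 1)) r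
            + (n + i - m (r - 1)) * Nat.choose (m (r - 1)) (r - 1))
          + (i + 1) * ∑ k ∈ Finset.Icc r i, Nat.choose (m k) (k + 1) := by
          rw [← hrq]; ring
      _ ≤ ((n + i - m r) * Nat.choose (m r) r + n * Nat.choose (m (r - 1)) (r - 1))
          + (i + 1) * ∑ k ∈ Finset.Icc r i, Nat.choose (m k) (k + 1) := by
          exact Nat.add_le_add_right hstep _
      _ = n * Nat.choose (m (r - 1)) (r - 1)
          + ((i + 1) * (∑ k ∈ Finset.Icc r i, Nat.choose (m k) (k + 1))
            + (n + i - m r) * Nat.choose (m r) r) := by ring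
      _ ≤ n * Nat.choose (m (r - 1)) (r - 1)
          + n * ∑ k ∈ Finset.Icc r i, Nat.choose (m k) k := by
          exact Nat.add_le_add_left IH _
      _ = n * (Nat.choose (m (r - 1)) (r - 1)
          + ∑ k ∈ Finset.Icc r i, Nat.choose (m k) k) := by ring

/-- If `0 < h ≤ C(n+s-1, s-1)` then `n·h ≥ s·h^(s-1)`. -/
theorem stmt1 (n s h : ℕ) (hn : 0 < n) (hs : 0 < s) (hh : 0 < h)
    (hb : h ≤ Nat.choose (n + s - 1) (s - 1)) :
    ∀ j m, IsMacaulayRep h (s - 1) j m → s * macaulayLower (s - 1) j m ≤ n * h := by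
  intro j m hrep
  obtain ⟨hij, hlow, hchain, hsum⟩ := hrep
  set i : ℕ := s - 1 with hidef
  have hi1 : 1 ≤ i := by omega
  have hsi : s = i + 1 := by omega
  have hbi : h ≤ Nat.choose (n + i) i := by
    have : n + s - 1 = n + i := by omega
    rwa [this] at hb
  have hterm : Nat.choose (m i) i ≤ h := by
    rw [hsum]
    have hmem : i ∈ Finset.Icc (i - j) i :=
      Finset.mem_Icc.mpr ⟨Nat.sub_le i j, le_refl i⟩
    exact Finset.single_le_sum (f := fun k => Nat.choose (m k) k)
      (fun k _ => Nat.zero_le _) hmem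
  have htop : m i ≤ n + i := by
    by_contra hcon
    push_neg at hcon
    have h1 : Nat.choose (n + i + 1) i ≤ Nat.choose (m i) i :=
      Nat.choose_le_choose i (by omega)
    have h2 : Nat.choose (n + i + 1) i
        = Nat.choose (n + i) (i - 1) + Nat.choose (n + i) i := by
      have : i = (i - 1) + 1 := by omega
      rw [this]
      exact Nat.choose_succ_succ _ _
    have h3 : 0 < Nat.choose (n + i) (i - 1) := Nat.choose_pos (by omega)
    omega
  have htop' : 1 ≤ j → m i + 1 ≤ n + i := by
    intro hj1
    have hpair : ({i - j, i} : Finset ℕ) ⊆ Finset.Icc (i - j) i := by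
      intro x hx
      simp only [Finset.mem_insert, Finset.mem_singleton] at hx
      rcases hx with rfl | rfl <;> exact Finset.mem_Icc.mpr ⟨by omega, by omega⟩
    have hne : i - j ≠ i := by omega
    have hsum2 : Nat.choose (m (i - j)) (i - j) + Nat.choose (m i) i ≤ h := by
      rw [hsum]
      have e1 : ∑ k ∈ ({i - j, i} : Finset ℕ), Nat.choose (m k) k
          = Nat.choose (m (i - j)) (i - j) + Nat.choose (m i) i :=
        Finset.sum_pair (f := fun k => Nat.choose (m k) k) hne
      calc Nat.choose (m (i - j)) (i - j) + Nat.choose (m i) i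
          = ∑ k ∈ ({i - j, i} : Finset ℕ), Nat.choose (m k) k := e1.symm
        _ ≤ ∑ k ∈ Finset.Icc (i - j) i, Nat.choose (m k) k :=
            Finset.sum_le_sum_of_subset hpair
    have hpos : 0 < Nat.choose (m (i - j)) (i - j) := Nat.choose_pos hlow
    by_contra hcon
    push_neg at hcon
    have h1 : Nat.choose (n + i) i ≤ Nat.choose (m i) i :=
      Nat.choose_le_choose i (by omega)
    omega
  have hkey := key_ineq n i j m (by omega) hij hlow hchain htop htop' j (le_refl j)
  have : (i + 1) * macaulayLower i j m ≤ n * h := by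
    rw [hsum]
    calc (i + 1) * macaulayLower i j m
        ≤ (i + 1) * (∑ k ∈ Finset.Icc (i - j) i, Nat.choose (m k) (k + 1))
          + (n + i - m (i - j)) * Nat.choose (m (i - j)) (i - j) := by
          unfold macaulayLower; omega
      _ ≤ n * ∑ k ∈ Finset.Icc (i - j) i, Nat.choose (m k) k := hkey
  rwa [hsi]
end

section
/- Fix positive integers d and m with m ≥ d. For a nonempty subset T of {a ∈ ℤ_{>0}^d : a_1 + ... + a_d = m}, let I(T) = {b ∈ ℤ_{>0}^d : b ≤ a componentwise for some a ∈ T}. Then |I(T)| ≥ (m/d)·|T|, with equality when T is the full level set {a ∈ ℤ_{>0}^d : a_1 + ... + a_d = m}. -/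
/-!
Lowering one coordinate of the members of a set `T` on level `m` gives its shadow `∂T` on
level `m - 1`, and `I(T) = T ⊔ I(∂T)`; so by induction on `m` it suffices to show
`(m - d)|T| ≤ (m - 1)|∂T|`. Count the pairs `(a, i)` with `a ∈ T`, weighted by `a i - 1`: the total
weight is `(m - d)|T|`, and lowering `a i` maps them injectively to pairs `(b, i)` with `b ∈ ∂T`
and weight `b i`, of total weight at most `(m - 1)|∂T|`. For the full level set lowering is
onto the level below, and all these inequalities are equalities.
-/

/-- The down-set `I(T) = {b ∈ ℤ_{>0}^d : b ≤ a componentwise for some a ∈ T}`,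
with `ℤ_{>0}^d` modeled as functions `Fin d → ℕ` with all values positive. -/
def posDown (d : ℕ) (T : Set (Fin d → ℕ)) : Set (Fin d → ℕ) :=
  {b | (∀ i, 0 < b i) ∧ ∃ a ∈ T, ∀ i, b i ≤ a i}

section

open Finset

variable {d : ℕ}

def posLevel (d m : ℕ) : Finset (Fin d → ℕ) :=
  (Nat.antidiagonalTuple d m).filter fun a => ∀ i, 0 < a i

lemma mem_posLevel {m : ℕ} {a : Fin d → ℕ} :
    a ∈ posLevel d m ↔ (∀ i, 0 < a i) ∧ ∑ i, a i = m := by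
  rw [posLevel, mem_filter, Nat.mem_antidiagonalTuple, and_comm]

lemma posLevel_zero (hd : 0 < d) : posLevel d 0 = ∅ := by
  refine eq_empty_of_forall_notMem fun a ha => ?_
  obtain ⟨hpos, hsum⟩ := mem_posLevel.1 ha
  exact (sum_pos (fun i _ => hpos i) (univ_nonempty_iff.2 ⟨⟨0, hd⟩⟩)).ne' hsum

lemma single_le_of_pos {a : Fin d → ℕ} {i : Fin d} (h : 0 < a i) : Pi.single i 1 ≤ a := by
  intro j
  rcases eq_or_ne j i with rfl | hj
  · simp only [Pi.single_eq_same]; omega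
  · simp [hj]

def lower (i : Fin d) (a : Fin d → ℕ) : Fin d → ℕ := a - Pi.single i 1

lemma lower_apply (i : Fin d) (a : Fin d → ℕ) (j : Fin d) :
    lower i a j = if j = i then a i - 1 else a j := by
  rcases eq_or_ne j i with rfl | hj <;> simp [lower, *]

lemma sum_lower {a : Fin d → ℕ} {i : Fin d} (h : 0 < a i) :
    ∑ j, lower i a j = ∑ j, a j - 1 := by
  simp only [lower, Pi.sub_apply]
  rw [sum_tsub_distrib _ fun j _ => single_le_of_pos h j, sum_pi_single', if_pos (mem_univ i)]

lemma lower_injOn (i : Fin d) : Set.InjOn (lower i) {a | 0 < a i} := fun _ ha _ ha' h =>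
  (tsub_left_inj (single_le_of_pos ha) (single_le_of_pos ha')).1 h

lemma lower_le (i : Fin d) (a : Fin d → ℕ) : lower i a ≤ a := tsub_le_self

def lowerAt (i : Fin d) (S : Finset (Fin d → ℕ)) : Finset (Fin d → ℕ) :=
  (S.filter fun a => 2 ≤ a i).image (lower i)

def lowerShadow (S : Finset (Fin d → ℕ)) : Finset (Fin d → ℕ) :=
  univ.biUnion fun i => lowerAt i S

lemma mem_lowerShadow {S : Finset (Fin d → ℕ)} {b : Fin d → ℕ} :
    b ∈ lowerShadow S ↔ ∃ i, ∃ a ∈ S, 2 ≤ a i ∧ lower i a = b := by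
  simp [lowerShadow, lowerAt, and_assoc]

lemma lowerAt_subset_lowerShadow (i : Fin d) (S : Finset (Fin d → ℕ)) :
    lowerAt i S ⊆ lowerShadow S :=
  subset_biUnion_of_mem (fun i => lowerAt i S) (mem_univ i)

lemma lowerShadow_subset_posLevel {m : ℕ} {S : Finset (Fin d → ℕ)}
    (hS : S ⊆ posLevel d (m + 1)) : lowerShadow S ⊆ posLevel d m := by
  intro b hb
  obtain ⟨i, a, ha, hai, rfl⟩ := mem_lowerShadow.1 hb
  obtain ⟨hpos, hsum⟩ := mem_posLevel.1 (hS ha)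
  refine mem_posLevel.2 ⟨fun j => ?_, by rw [sum_lower (by omega), hsum, Nat.add_sub_cancel]⟩
  rw [lower_apply]
  split_ifs <;> grind

lemma sum_tsub_one_eq_sum_lowerAt (S : Finset (Fin d → ℕ)) (i : Fin d) :
    ∑ a ∈ S, (a i - 1) = ∑ b ∈ lowerAt i S, b i := by
  have hinj : Set.InjOn (lower i) ↑(S.filter fun a => 2 ≤ a i) := fun a ha a' ha' =>
    lower_injOn i (Nat.lt_of_lt_of_le two_pos (mem_filter.1 ha).2)
      (Nat.lt_of_lt_of_le two_pos (mem_filter.1 ha').2)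
  calc ∑ a ∈ S, (a i - 1) = ∑ a ∈ S with 2 ≤ a i, (a i - 1) :=
        (sum_filter_of_ne fun a _ h => by omega).symm
    _ = ∑ a ∈ S with 2 ≤ a i, lower i a i := sum_congr rfl fun a _ => by simp [lower_apply]
    _ = ∑ b ∈ lowerAt i S, b i := (sum_image (f := fun b => b i) hinj).symm

lemma sum_sum_apply_of_subset_posLevel {m : ℕ} {B : Finset (Fin d → ℕ)}
    (hB : B ⊆ posLevel d m) : ∑ i, ∑ b ∈ B, b i = m * #B := by
  rw [sum_comm, sum_congr rfl fun b hb => (mem_posLevel.1 (hB hb)).2, sum_const, smul_eq_mul,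
    mul_comm]

-- Count the pairs `(a, i)` with weight `a i - 1`, which is the `i`-th entry of `lower i a`.
lemma succ_mul_card_eq {m : ℕ} {S : Finset (Fin d → ℕ)} (hS : S ⊆ posLevel d (m + 1)) :
    (m + 1) * #S = d * #S + ∑ i, ∑ b ∈ lowerAt i S, b i := by
  have hpos : ∀ a ∈ S, ∀ i, 0 < a i := fun a ha => (mem_posLevel.1 (hS ha)).1
  calc (m + 1) * #S = ∑ i, ∑ a ∈ S, ((a i - 1) + 1) := by
        rw [← sum_sum_apply_of_subset_posLevel hS]
        exact sum_congr rfl fun i _ => sum_congr rfl fun a ha => by have := hpos a ha i; omega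
    _ = d * #S + ∑ i, ∑ b ∈ lowerAt i S, b i := by
        simp only [sum_add_distrib, sum_tsub_one_eq_sum_lowerAt, sum_const, card_univ,
          Fintype.card_fin, smul_eq_mul, mul_one]
        ring

lemma succ_mul_card_le {m : ℕ} {S : Finset (Fin d → ℕ)} (hS : S ⊆ posLevel d (m + 1)) :
    (m + 1) * #S ≤ d * #S + m * #(lowerShadow S) := by
  rw [succ_mul_card_eq hS, ← sum_sum_apply_of_subset_posLevel (lowerShadow_subset_posLevel hS)]
  gcongr with i
  exact lowerAt_subset_lowerShadow i S

lemma lowerAt_posLevel (i : Fin d) (m : ℕ) : lowerAt i (posLevel d (m + 1)) = posLevel d m := by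
  refine subset_antisymm ((lowerAt_subset_lowerShadow i _).trans
    (lowerShadow_subset_posLevel subset_rfl)) fun b hb => ?_
  obtain ⟨hpos, hsum⟩ := mem_posLevel.1 hb
  have hraise : b + Pi.single i 1 ∈ posLevel d (m + 1) := by
    refine mem_posLevel.2 ⟨fun j => Nat.add_pos_left (hpos j) _, ?_⟩
    simp [sum_add_distrib, hsum]
  refine mem_image.2 ⟨b + Pi.single i 1, mem_filter.2 ⟨hraise, ?_⟩, add_tsub_cancel_right _ _⟩
  simp only [Pi.add_apply, Pi.single_eq_same]
  exact Nat.succ_le_succ (hpos i)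

lemma lowerShadow_posLevel (hd : 0 < d) (m : ℕ) :
    lowerShadow (posLevel d (m + 1)) = posLevel d m := by
  have : Nonempty (Fin d) := ⟨⟨0, hd⟩⟩
  ext b
  simp [lowerShadow, lowerAt_posLevel]

lemma succ_mul_card_posLevel (m : ℕ) :
    (m + 1) * #(posLevel d (m + 1)) = d * #(posLevel d (m + 1)) + m * #(posLevel d m) := by
  simp only [succ_mul_card_eq subset_rfl, lowerAt_posLevel,
    sum_sum_apply_of_subset_posLevel subset_rfl]

lemma finite_posDown (S : Finset (Fin d → ℕ)) : (posDown d S).Finite :=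
  (S.finite_toSet.biUnion fun a _ => Set.finite_Iic a).subset fun _ ⟨_, _, ha, hba⟩ =>
    Set.mem_biUnion ha hba

lemma posDown_eq_union {m : ℕ} {S : Finset (Fin d → ℕ)} (hS : S ⊆ posLevel d (m + 1)) :
    posDown d S = ↑S ∪ posDown d ↑(lowerShadow S) := by
  ext b
  constructor
  · rintro ⟨hpos, a, ha, hba⟩
    by_cases hb : b = a
    · exact Or.inl (hb ▸ ha)
    obtain ⟨i, hi⟩ := (Pi.lt_def.1 (lt_of_le_of_ne hba hb)).2
    refine Or.inr ⟨hpos, lower i a, mem_lowerShadow.2 ⟨i, a, ha, by grind, rfl⟩, fun j => ?_⟩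
    rw [lower_apply]
    split_ifs with hj
    · subst hj; omega
    · exact hba j
  · rintro (hb | ⟨hpos, _, ha', hba'⟩)
    · exact ⟨(mem_posLevel.1 (hS hb)).1, b, hb, fun _ => le_rfl⟩
    · obtain ⟨i, a, ha, -, rfl⟩ := mem_lowerShadow.1 ha'
      exact ⟨hpos, a, ha, le_trans hba' (lower_le i a)⟩

lemma disjoint_posDown_lowerShadow {m : ℕ} {S : Finset (Fin d → ℕ)}
    (hS : S ⊆ posLevel d (m + 1)) : Disjoint (S : Set (Fin d → ℕ)) (posDown d ↑(lowerShadow S)) :=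
  Set.disjoint_left.2 fun b hb ⟨_, a, ha, hba⟩ => by
    have hb_sum := (mem_posLevel.1 (hS hb)).2
    have ha_sum := (mem_posLevel.1 (lowerShadow_subset_posLevel hS ha)).2
    have := sum_le_sum fun i (_ : i ∈ univ) => hba i
    omega

lemma ncard_posDown_eq {m : ℕ} {S : Finset (Fin d → ℕ)} (hS : S ⊆ posLevel d (m + 1)) :
    (posDown d S).ncard = #S + (posDown d ↑(lowerShadow S)).ncard := by
  rw [posDown_eq_union hS, Set.ncard_union_eq (disjoint_posDown_lowerShadow hS) S.finite_toSet
    (finite_posDown _), Set.ncard_coe_finset]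

theorem mul_card_le_mul_ncard_posDown :
    ∀ {m : ℕ} {S : Finset (Fin d → ℕ)}, S ⊆ posLevel d m → m * #S ≤ d * (posDown d S).ncard
  | 0, _, _ => by simp
  | m + 1, S, hS => by
    have ih := mul_card_le_mul_ncard_posDown (lowerShadow_subset_posLevel hS)
    rw [ncard_posDown_eq hS, mul_add]
    linarith [succ_mul_card_le hS]

theorem mul_ncard_posDown_posLevel (hd : 0 < d) :
    ∀ m : ℕ, d * (posDown d (posLevel d m)).ncard = m * #(posLevel d m)
  | 0 => by simp [posLevel_zero hd, posDown]
  | m + 1 => by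
    rw [ncard_posDown_eq subset_rfl, lowerShadow_posLevel hd, mul_add,
      mul_ncard_posDown_posLevel hd m, succ_mul_card_posLevel]

end

theorem stmt8_general (d m : ℕ) (hd : 0 < d) (T : Set (Fin d → ℕ))
    (hT : ∀ a ∈ T, (∀ i, 0 < a i) ∧ ∑ i, a i = m) :
    ((m : ℚ) / d) * (T.ncard : ℚ) ≤ ((posDown d T).ncard : ℚ) ∧
    (T = {a : Fin d → ℕ | (∀ i, 0 < a i) ∧ ∑ i, a i = m} →
      ((posDown d T).ncard : ℚ) = ((m : ℚ) / d) * (T.ncard : ℚ)) := by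
  have hsub : T ⊆ posLevel d m := fun a ha => mem_posLevel.2 (hT a ha)
  obtain ⟨S, rfl⟩ := ((posLevel d m).finite_toSet.subset hsub).exists_finset_coe
  have hdQ : (0 : ℚ) < d := by exact_mod_cast hd
  rw [Set.ncard_coe_finset, div_mul_eq_mul_div, div_le_iff₀ hdQ, eq_div_iff hdQ.ne']
  refine ⟨?_, fun hfull => ?_⟩
  · exact_mod_cast (mul_card_le_mul_ncard_posDown (Finset.coe_subset.1 hsub)).trans_eq
      (mul_comm _ _)
  · obtain rfl : S = posLevel d m :=
      Finset.coe_injective (hfull.trans (Set.ext fun a => mem_posLevel.symm))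
    exact_mod_cast (mul_comm _ _).trans (mul_ncard_posDown_posLevel hd m)

/-- For a nonempty subset `T` of the level set `{a ∈ ℤ_{>0}^d : Σ a_i = m}`,
one has `|I(T)| ≥ (m/d)·|T|`, with equality when `T` is the whole level set. -/
theorem stmt8 (d m : ℕ) (hd : 0 < d) (hm : d ≤ m) (T : Set (Fin d → ℕ))
    (hne : T.Nonempty) (hT : ∀ a ∈ T, (∀ i, 0 < a i) ∧ ∑ i, a i = m) :
    ((m : ℚ) / d) * (T.ncard : ℚ) ≤ ((posDown d T).ncard : ℚ) ∧
    (T = {a : Fin d → ℕ | (∀ i, 0 < a i) ∧ ∑ i, a i = m} →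
      ((posDown d T).ncard : ℚ) = ((m : ℚ) / d) * (T.ncard : ℚ)) :=
  stmt8_general d m hd T hT
end

section
/- For a positive integer n and an integer k with 0 ≤ k ≤ n-1, the n-dimensional Lebesgue measure of the slab {x ∈ [0,1]^n : k ≤ x_1 + ... + x_n ≤ k+1} equals A(n, k)/n!, where A(n, k) is the Eulerian number counting permutations of {1, ..., n} with exactly k descents. -/
/-!
Stanley's argument. The partial-sum map `S x = (x₀, x₀ + x₁, …)` is linear with determinant one.
For almost every `x`, the fractional parts `y = fract (S x)` are nonzero and pairwise distinct, so
they are ordered by a unique permutation `τ`. If moreover `0 ≤ xᵢ ≤ 1`, the integer part of `S x`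
goes up at step `i` exactly when `y` goes down there; hence `S x = y + S c` for the descent
vector `c` of `τ`, and `∑ xᵢ = y_last + des τ`. So up to a null set the slab is the disjoint union,
over the permutations with `k` descents, of the translates `S⁻¹ Eτ + c` of the order regions
`Eτ = {y ∈ (0,1)ⁿ ordered like τ}`, each of which has volume `1 / n!`.
-/

/-- The Eulerian number `A(n, k)`: the number of permutations of `{1, ..., n}`
with exactly `k` descents. -/
def eulerian (n k : ℕ) : ℕ :=
  (Finset.univ.filter (fun σ : Equiv.Perm (Fin n) =>
    (Finset.univ.filter (fun i : Fin n =>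
      (i : ℕ) + 1 < n ∧ σ ⟨((i : ℕ) + 1) % n, Nat.mod_lt _ i.pos⟩ < σ i)).card = k)).card

open MeasureTheory Finset Equiv

theorem Int.floor_add_sub_floor_of_mem_Icc {R : Type*} [CommRing R] [LinearOrder R]
    [IsStrictOrderedRing R] [FloorRing R] {a t : R} (ht : t ∈ Set.Icc 0 1)
    (hne : Int.fract (a + t) ≠ Int.fract a) :
    ⌊a + t⌋ - ⌊a⌋ = if Int.fract (a + t) < Int.fract a then 1 else 0 := by
  set d := ⌊a + t⌋ - ⌊a⌋ with hd
  have hdiff : Int.fract (a + t) - Int.fract a = t - d := by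
    simp only [hd, Int.fract]; push_cast; ring
  have h₁ := Int.fract_nonneg (a + t)
  have h₂ := Int.fract_lt_one (a + t)
  have h₃ := Int.fract_nonneg a
  have h₄ := Int.fract_lt_one a
  have hd01 : d = 0 ∨ d = 1 := by
    have hlo : ((-1 : ℤ) : R) < d := by push_cast; linarith [ht.1]
    have hhi : (d : R) < ((2 : ℤ) : R) := by push_cast; linarith [ht.2]
    have := Int.cast_lt.1 hlo
    have := Int.cast_lt.1 hhi
    omega
  rcases hd01 with h | h
  · rw [h, if_neg]
    rw [h, Int.cast_zero, sub_zero] at hdiff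
    linarith [ht.1]
  · rw [h, if_pos]
    rw [h, Int.cast_one] at hdiff
    exact lt_of_le_of_ne (by linarith [ht.2]) hne

theorem MeasureTheory.Measure.addHaar_setOf_linearMap_eq {E : Type*} [NormedAddCommGroup E]
    [NormedSpace ℝ E] [MeasurableSpace E] [BorelSpace E] [FiniteDimensional ℝ E]
    (μ : Measure E) [μ.IsAddHaarMeasure] {ℓ : E →ₗ[ℝ] ℝ} (hℓ : ℓ ≠ 0) (c : ℝ) :
    μ {x | ℓ x = c} = 0 := by
  obtain ⟨x₀, hx₀⟩ := ℓ.surjective_of_ne_zero hℓ c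
  have hset : {x | ℓ x = c} = (· + -x₀) ⁻¹' (LinearMap.ker ℓ : Set E) := by
    ext x
    simp [hx₀, ← sub_eq_add_neg, sub_eq_zero]
  rw [hset, measure_preimage_add_right]
  exact Measure.addHaar_submodule μ _ fun h => hℓ (LinearMap.ker_eq_top.1 h)

theorem ae_fract_ne_zero_and_injective {ι : Type*} [Fintype ι] :
    ∀ᵐ y : ι → ℝ, (∀ i, Int.fract (y i) ≠ 0) ∧ Function.Injective (Int.fract ∘ y) := by
  classical
  let π (i : ι) : (ι → ℝ) →ₗ[ℝ] ℝ := LinearMap.proj i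
  have hπ : ∀ i, π i ≠ 0 := fun i h => by
    simpa [π] using LinearMap.congr_fun h (Pi.single i 1)
  have hπ_sub : ∀ i j, i ≠ j → π i - π j ≠ 0 := fun i j hij h => by
    simpa [π, Pi.single_apply, Ne.symm hij] using LinearMap.congr_fun h (Pi.single i 1)
  refine ae_iff.2 <| measure_mono_null (t := (⋃ (i) (m : ℤ), {y | π i y = m}) ∪
      ⋃ (i) (j) (_ : i ≠ j) (m : ℤ), {y | (π i - π j) y = m}) ?_ (measure_union_null ?_ ?_)
  · intro y hy
    simp only [Set.mem_ofPred_eq, not_and_or, not_forall, not_not, Function.not_injective_iff] at hy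
    rcases hy with ⟨i, hi⟩ | ⟨i, j, hij, hne⟩
    · obtain ⟨m, hm⟩ := Int.fract_eq_zero_iff.1 hi
      exact Or.inl (Set.mem_iUnion₂.2 ⟨i, m, hm.symm⟩)
    · obtain ⟨m, hm⟩ := Int.fract_eq_fract.1 hij
      simp only [Set.mem_union, Set.mem_iUnion]
      exact Or.inr ⟨i, j, hne, m, hm⟩
  · exact measure_iUnion_null fun i => measure_iUnion_null fun m =>
      Measure.addHaar_setOf_linearMap_eq _ (hπ i) _
  · exact measure_iUnion_null fun i => measure_iUnion_null fun j => measure_iUnion_null fun hij =>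
      measure_iUnion_null fun m => Measure.addHaar_setOf_linearMap_eq _ (hπ_sub i j hij) _

section PartialSums

variable {ι : Type*} [Fintype ι] [LinearOrder ι]

noncomputable def partialSums : (ι → ℝ) →ₗ[ℝ] (ι → ℝ) :=
  Matrix.toLin' (Matrix.of fun i j => if j ≤ i then 1 else 0)

theorem partialSums_apply [LocallyFiniteOrderBot ι] (x : ι → ℝ) (i : ι) :
    partialSums x i = ∑ j ∈ Iic i, x j := by
  simp [partialSums, Matrix.mulVec, dotProduct, ← Finset.sum_filter, Finset.filter_ge_eq_Iic]

theorem det_partialSums : LinearMap.det (partialSums : (ι → ℝ) →ₗ[ℝ] (ι → ℝ)) = 1 := by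
  rw [partialSums, LinearMap.det_toLin', Matrix.det_of_isLowerTriangular]
  · simp
  · intro i j (hij : i < j)
    simp [hij.not_ge]

theorem measurePreserving_partialSums :
    MeasurePreserving (partialSums : (ι → ℝ) →ₗ[ℝ] (ι → ℝ)) := by
  refine ⟨partialSums.continuous_of_finiteDimensional.measurable, ?_⟩
  rw [Measure.map_linearMap_addHaar_eq_smul_addHaar _ (by simp [det_partialSums]),
    det_partialSums]
  simp

theorem partialSums_intCast [LocallyFiniteOrderBot ι] (z : ι → ℤ) (i : ι) :
    partialSums (Int.cast ∘ z) i = ((∑ j ∈ Iic i, z j : ℤ) : ℝ) := by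
  simp [partialSums_apply]

end PartialSums

theorem Fin.sum_Iic_zero {M : Type*} [AddCommMonoid M] {m : ℕ} (f : Fin (m + 1) → M) :
    ∑ j ∈ Iic 0, f j = f 0 := by
  rw [← bot_eq_zero, Finset.Iic_bot, sum_singleton]

theorem Fin.sum_Iic_succ {M : Type*} [AddCommMonoid M] {m : ℕ} (f : Fin (m + 1) → M)
    (i : Fin m) :
    ∑ j ∈ Iic i.succ, f j = ∑ j ∈ Iic i.castSucc, f j + f i.succ := by
  have : Iic i.succ = insert i.succ (Iic i.castSucc) := by
    ext j
    simp only [mem_insert, mem_Iic, Fin.le_castSucc_iff]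
    exact le_iff_eq_or_lt
  rw [this, sum_insert (by simp), add_comm]

section FinPartialSums

variable {m : ℕ}

theorem partialSums_zero (x : Fin (m + 1) → ℝ) : partialSums x 0 = x 0 := by
  rw [partialSums_apply, Fin.sum_Iic_zero]

theorem partialSums_succ (x : Fin (m + 1) → ℝ) (i : Fin m) :
    partialSums x i.succ = partialSums x i.castSucc + x i.succ := by
  simp only [partialSums_apply, Fin.sum_Iic_succ]

theorem partialSums_succ_sub_partialSums_castSucc (x : Fin (m + 1) → ℝ) (i : Fin m) :
    partialSums x i.succ - partialSums x i.castSucc = x i.succ := by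
  rw [partialSums_succ, add_sub_cancel_left]

theorem partialSums_last (x : Fin (m + 1) → ℝ) : partialSums x (Fin.last m) = ∑ i, x i := by
  rw [partialSums_apply, ← Fin.top_eq_last, Finset.Iic_top]

end FinPartialSums

section OrderedRegion

variable {n : ℕ}

def orderedRegion (τ : Perm (Fin n)) : Set (Fin n → ℝ) :=
  {y | (∀ i, y i ∈ Set.Ioo 0 1) ∧ StrictMono (y ∘ τ.symm)}

variable {y : Fin n → ℝ} {σ τ : Perm (Fin n)}

theorem lt_iff_lt_of_strictMono_comp_symm (h : StrictMono (y ∘ τ.symm)) {a b : Fin n} :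
    y a < y b ↔ τ a < τ b := by
  simpa using h.lt_iff_lt (a := τ a) (b := τ b)

theorem eq_of_strictMono_comp_symm (hσ : StrictMono (y ∘ σ.symm)) (hτ : StrictMono (y ∘ τ.symm)) :
    σ = τ := by
  have hsort {π : Perm (Fin n)} (h : StrictMono (y ∘ π.symm)) : π.symm = Tuple.sort y :=
    Tuple.eq_sort_iff.2 ⟨h.monotone, fun _ _ hij heq => absurd heq (h hij).ne⟩
  simpa using congrArg Equiv.symm ((hsort hσ).trans (hsort hτ).symm)

theorem exists_strictMono_comp_symm (hy : Function.Injective y) :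
    ∃ τ : Perm (Fin n), StrictMono (y ∘ τ.symm) :=
  ⟨(Tuple.sort y).symm, by
    simpa using (Tuple.monotone_sort y).strictMono_of_injective (hy.comp (Tuple.sort y).injective)⟩

theorem measurableSet_orderedRegion (τ : Perm (Fin n)) : MeasurableSet (orderedRegion τ) := by
  have : orderedRegion τ = (⋂ i, {y | y i ∈ Set.Ioo 0 1}) ∩
      ⋂ (a) (b) (_ : a < b), {y : Fin n → ℝ | y (τ.symm a) < y (τ.symm b)} := by
    ext y
    simp [orderedRegion, StrictMono]
  rw [this]
  exact .inter (.iInter fun i => measurableSet_Ioo.preimage (measurable_pi_apply i))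
    (.iInter fun a => .iInter fun b => .iInter fun _ =>
      measurableSet_lt (measurable_pi_apply _) (measurable_pi_apply _))

theorem volume_orderedRegion_eq_volume_orderedRegion_one_perm (τ : Perm (Fin n)) :
    volume (orderedRegion τ) = volume (orderedRegion (1 : Perm (Fin n))) := by
  have hτ := volume_preserving_arrowCongr' τ (MeasurableEquiv.refl ℝ) (.id volume)
  have : orderedRegion τ = MeasurableEquiv.arrowCongr' τ (MeasurableEquiv.refl ℝ) ⁻¹'
      orderedRegion 1 := by
    ext y
    exact and_congr (τ.symm.forall_congr_right (q := fun i => y i ∈ Set.Ioo 0 1)).symm Iff.rfl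
  rw [this, hτ.measure_preimage (measurableSet_orderedRegion 1).nullMeasurableSet]

theorem volume_orderedRegion (τ : Perm (Fin n)) :
    volume (orderedRegion τ) = (n.factorial : ENNReal)⁻¹ := by
  let cube : Set (Fin n → ℝ) := Set.univ.pi fun _ => Set.Ioo 0 1
  have hcube : volume cube = 1 := by simp [cube, Real.volume_pi_Ioo]
  have hsub : (⋃ σ, orderedRegion σ) ⊆ cube := Set.iUnion_subset fun σ y hy =>
    Set.mem_univ_pi.2 hy.1
  have hcover : cube ≤ᵐ[volume] ⋃ σ, orderedRegion σ := by
    filter_upwards [ae_fract_ne_zero_and_injective] with y hy hyc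
    replace hyc : ∀ i, y i ∈ Set.Ioo 0 1 := Set.mem_univ_pi.1 hyc
    have hfract : Int.fract ∘ y = y := funext fun i => Int.fract_eq_self.2 ⟨(hyc i).1.le, (hyc i).2⟩
    obtain ⟨σ, hσ⟩ := exists_strictMono_comp_symm (hfract ▸ hy.2)
    exact Set.mem_iUnion.2 ⟨σ, hyc, hσ⟩
  have hunion : volume (⋃ σ, orderedRegion σ) = 1 :=
    le_antisymm (hcube ▸ measure_mono hsub) (hcube ▸ measure_mono_ae hcover)
  rw [measure_iUnion (fun σ σ' hne => Set.disjoint_left.2 fun y hσ hσ' =>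
      hne (eq_of_strictMono_comp_symm hσ.2 hσ'.2)) measurableSet_orderedRegion,
    tsum_fintype, sum_congr rfl fun σ _ => volume_orderedRegion_eq_volume_orderedRegion_one_perm σ,
    sum_const, card_univ, Fintype.card_perm, Fintype.card_fin, nsmul_eq_mul] at hunion
  rw [volume_orderedRegion_eq_volume_orderedRegion_one_perm]
  exact ENNReal.eq_inv_of_mul_eq_one_left (by rwa [mul_comm])

end OrderedRegion

section Descents

variable {m : ℕ}

def descents (τ : Perm (Fin (m + 1))) : Finset (Fin m) := {i | τ i.succ < τ i.castSucc}

def descentVector (τ : Perm (Fin (m + 1))) : Fin (m + 1) → ℤ :=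
  Fin.cons 0 fun i => if τ i.succ < τ i.castSucc then 1 else 0

@[simp]
theorem descentVector_zero (τ : Perm (Fin (m + 1))) : descentVector τ 0 = 0 := rfl

@[simp]
theorem descentVector_succ (τ : Perm (Fin (m + 1))) (i : Fin m) :
    descentVector τ i.succ = if τ i.succ < τ i.castSucc then 1 else 0 :=
  Fin.cons_succ _ _ _

theorem sum_descentVector (τ : Perm (Fin (m + 1))) : ∑ i, descentVector τ i = #(descents τ) := by
  simp [descentVector, Fin.sum_cons, descents, sum_boole]

theorem card_descents (τ : Perm (Fin (m + 1))) :
    #(descents τ) = #{i : Fin (m + 1) | (i : ℕ) + 1 < m + 1 ∧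
      τ ⟨((i : ℕ) + 1) % (m + 1), Nat.mod_lt _ i.pos⟩ < τ i} := by
  refine card_bij (fun i _ => i.castSucc) (fun i hi => ?_) (fun _ _ _ _ h => Fin.castSucc_inj.1 h)
    (fun j hj => ?_)
  · have : (⟨((i : ℕ) + 1) % (m + 1), Nat.mod_lt _ i.castSucc.pos⟩ : Fin (m + 1)) = i.succ :=
      Fin.ext (Nat.mod_eq_of_lt (by omega))
    simp only [descents, mem_filter, mem_univ, true_and] at hi ⊢
    simp [this, hi]
  · simp only [mem_filter, mem_univ, true_and] at hj
    obtain ⟨hjm, hj⟩ := hj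
    refine ⟨⟨j, by omega⟩, ?_, rfl⟩
    have : (⟨((j : ℕ) + 1) % (m + 1), Nat.mod_lt _ j.pos⟩ : Fin (m + 1)) =
        (⟨j, by omega⟩ : Fin m).succ :=
      Fin.ext (Nat.mod_eq_of_lt hjm)
    simpa [descents, this] using hj

theorem eulerian_eq_card_descents (m k : ℕ) :
    eulerian (m + 1) k = #{τ : Perm (Fin (m + 1)) | #(descents τ) = k} := by
  simp only [eulerian, card_descents]

end Descents

section Pieces

variable {m : ℕ} {τ σ : Perm (Fin (m + 1))} {x : Fin (m + 1) → ℝ}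

def descentSimplex (τ : Perm (Fin (m + 1))) : Set (Fin (m + 1) → ℝ) :=
  {x | partialSums (x - Int.cast ∘ descentVector τ) ∈ orderedRegion τ}

theorem volume_descentSimplex (τ : Perm (Fin (m + 1))) :
    volume (descentSimplex τ) = ((m + 1).factorial : ENNReal)⁻¹ := by
  rw [← volume_orderedRegion τ]
  exact (measurePreserving_partialSums.comp (measurePreserving_sub_right volume _)).measure_preimage
    (measurableSet_orderedRegion τ).nullMeasurableSet

theorem measurableSet_descentSimplex (τ : Perm (Fin (m + 1))) : MeasurableSet (descentSimplex τ) :=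
  (measurableSet_orderedRegion τ).preimage
    (partialSums.continuous_of_finiteDimensional.measurable.comp (measurable_sub_const _))

theorem fract_partialSums_of_mem_descentSimplex (hx : x ∈ descentSimplex τ) :
    Int.fract ∘ partialSums x = partialSums (x - Int.cast ∘ descentVector τ) := by
  funext i
  have hy := hx.1 i
  rw [map_sub, Pi.sub_apply, partialSums_intCast] at hy ⊢
  rw [Function.comp_apply, ← Int.fract_sub_intCast, Int.fract_eq_self]
  exact ⟨hy.1.le, hy.2⟩

theorem disjoint_descentSimplex (h : σ ≠ τ) : Disjoint (descentSimplex σ) (descentSimplex τ) :=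
  Set.disjoint_left.2 fun x hσ hτ =>
    h <| eq_of_strictMono_comp_symm (y := Int.fract ∘ partialSums x)
    (by rw [fract_partialSums_of_mem_descentSimplex hσ]; exact hσ.2)
    (by rw [fract_partialSums_of_mem_descentSimplex hτ]; exact hτ.2)

theorem mem_Ioo_of_mem_descentSimplex (hx : x ∈ descentSimplex τ) (i : Fin (m + 1)) :
    x i ∈ Set.Ioo 0 1 := by
  set y := partialSums (x - Int.cast ∘ descentVector τ)
  obtain ⟨hy01, hy⟩ : y ∈ orderedRegion τ := hx
  cases i using Fin.cases with
  | zero => simpa [y, partialSums_zero] using hy01 0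
  | succ i =>
    have hxi : x i.succ = y i.succ - y i.castSucc + if τ i.succ < τ i.castSucc then 1 else 0 := by
      have h := partialSums_succ_sub_partialSums_castSucc (x - Int.cast ∘ descentVector τ) i
      simp only [Pi.sub_apply, Function.comp_apply, descentVector_succ] at h
      push_cast at h
      linarith
    have h₁ := hy01 i.succ
    have h₂ := hy01 i.castSucc
    rw [hxi]
    split_ifs with h
    · have := (lt_iff_lt_of_strictMono_comp_symm hy).2 h
      constructor <;> linarith [h₁.1, h₂.2]
    · have := (lt_iff_lt_of_strictMono_comp_symm hy).2 <|
        (not_lt.1 h).lt_of_ne (τ.injective.ne i.castSucc_lt_succ.ne)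
      constructor <;> linarith [h₁.2, h₂.1]

theorem sum_mem_Ioo_of_mem_descentSimplex (hx : x ∈ descentSimplex τ) :
    ∑ i, x i ∈ Set.Ioo (#(descents τ) : ℝ) (#(descents τ) + 1) := by
  have hlast := hx.1 (Fin.last m)
  rw [map_sub, Pi.sub_apply, partialSums_last, partialSums_last] at hlast
  have hc : ∑ i, ((Int.cast ∘ descentVector τ) i : ℝ) = #(descents τ) := by
    simp only [Function.comp_apply]
    exact_mod_cast sum_descentVector τ
  rw [hc] at hlast
  constructor <;> linarith [hlast.1, hlast.2]

theorem exists_mem_descentSimplex (hx : ∀ i, x i ∈ Set.Icc 0 1)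
    (hgen : (∀ i, Int.fract (partialSums x i) ≠ 0) ∧
      Function.Injective (Int.fract ∘ partialSums x)) :
    ∃ τ : Perm (Fin (m + 1)), x ∈ descentSimplex τ := by
  obtain ⟨τ, hτ⟩ := exists_strictMono_comp_symm hgen.2
  have hfloor (i : Fin (m + 1)) : ⌊partialSums x i⌋ = ∑ j ∈ Iic i, descentVector τ j := by
    induction i using Fin.induction with
    | zero =>
      have hx0 : x 0 ≠ 1 := fun h => hgen.1 0 (by simp [partialSums_zero, h])
      rw [Fin.sum_Iic_zero, partialSums_zero, descentVector_zero,
        Int.floor_eq_zero_iff.2 ⟨(hx 0).1, (hx 0).2.lt_of_ne hx0⟩]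
    | succ i ih =>
      have hne : Int.fract (partialSums x i.succ) ≠ Int.fract (partialSums x i.castSucc) :=
        hgen.2.ne i.castSucc_lt_succ.ne'
      have hstep := Int.floor_add_sub_floor_of_mem_Icc (hx i.succ) (by rwa [← partialSums_succ])
      have hlt := lt_iff_lt_of_strictMono_comp_symm hτ (a := i.succ) (b := i.castSucc)
      simp only [Function.comp_apply] at hlt
      rw [← partialSums_succ] at hstep
      simp only [hlt] at hstep
      rw [Fin.sum_Iic_succ, ← ih, descentVector_succ, ← hstep]
      ring
  have hy : partialSums (x - Int.cast ∘ descentVector τ) = Int.fract ∘ partialSums x := by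
    funext i
    rw [map_sub, Pi.sub_apply, partialSums_intCast, ← hfloor, Int.self_sub_floor,
      Function.comp_apply]
  refine ⟨τ, ?_⟩
  rw [descentSimplex, Set.mem_ofPred_eq, hy]
  exact ⟨fun i => ⟨(Int.fract_nonneg _).lt_of_ne (hgen.1 i).symm, Int.fract_lt_one _⟩, hτ⟩

end Pieces

def unitCubeSlab (n k : ℕ) : Set (Fin n → ℝ) :=
  {x | (∀ i, x i ∈ Set.Icc (0 : ℝ) 1) ∧ (k : ℝ) ≤ ∑ i, x i ∧ ∑ i, x i ≤ (k : ℝ) + 1}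

section Slab

variable {m : ℕ}

theorem descentSimplex_subset_unitCubeSlab (τ : Perm (Fin (m + 1))) :
    descentSimplex τ ⊆ unitCubeSlab (m + 1) #(descents τ) := fun _ hx =>
  ⟨fun i => Set.Ioo_subset_Icc_self (mem_Ioo_of_mem_descentSimplex hx i),
    (sum_mem_Ioo_of_mem_descentSimplex hx).1.le, (sum_mem_Ioo_of_mem_descentSimplex hx).2.le⟩

theorem unitCubeSlab_ae_le_biUnion_descentSimplex (k : ℕ) :
    unitCubeSlab (m + 1) k ≤ᵐ[volume]
      ⋃ τ ∈ ({τ | #(descents τ) = k} : Finset _), descentSimplex τ := by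
  filter_upwards [measurePreserving_partialSums.quasiMeasurePreserving.ae
    ae_fract_ne_zero_and_injective] with x hgen hx
  obtain ⟨τ, hτ⟩ := exists_mem_descentSimplex hx.1 hgen
  have hsum := sum_mem_Ioo_of_mem_descentSimplex hτ
  have hk : #(descents τ) = k := by
    have h₁ : (#(descents τ) : ℝ) < k + 1 := by linarith [hsum.1, hx.2.2]
    have h₂ : (k : ℝ) < #(descents τ) + 1 := by linarith [hsum.2, hx.2.1]
    have h₁' : #(descents τ) < k + 1 := by exact_mod_cast h₁
    have h₂' : k < #(descents τ) + 1 := by exact_mod_cast h₂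
    omega
  exact Set.mem_biUnion (mem_filter.2 ⟨mem_univ τ, hk⟩) hτ

end Slab

theorem volume_unitCubeSlab (m k : ℕ) :
    volume (unitCubeSlab (m + 1) k) = eulerian (m + 1) k / ((m + 1).factorial : ENNReal) := by
  have hslab : volume (unitCubeSlab (m + 1) k) =
      volume (⋃ τ ∈ ({τ | #(descents τ) = k} : Finset _), descentSimplex τ) :=
    le_antisymm (measure_mono_ae (unitCubeSlab_ae_le_biUnion_descentSimplex k)) <| measure_mono <|
      Set.iUnion₂_subset fun τ hτ => (mem_filter.1 hτ).2 ▸ descentSimplex_subset_unitCubeSlab τ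
  rw [hslab, measure_biUnion_finset (fun σ _ τ _ h => disjoint_descentSimplex h)
      (fun τ _ => measurableSet_descentSimplex τ), sum_congr rfl fun τ _ => volume_descentSimplex τ,
    sum_const, nsmul_eq_mul, eulerian_eq_card_descents, div_eq_mul_inv]

theorem stmt13_general (n k : ℕ) (hn : 0 < n) :
    MeasureTheory.volume
        {x : Fin n → ℝ | (∀ i, x i ∈ Set.Icc (0 : ℝ) 1) ∧
          (k : ℝ) ≤ ∑ i, x i ∧ ∑ i, x i ≤ (k : ℝ) + 1}
      = (eulerian n k : ENNReal) / (Nat.factorial n : ENNReal) := by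
  obtain ⟨m, rfl⟩ := Nat.exists_eq_add_one_of_ne_zero hn.ne'
  exact volume_unitCubeSlab m k

/-- The slab `{x ∈ [0,1]^n : k ≤ Σ x_i ≤ k+1}` has volume `A(n,k)/n!`. -/
theorem stmt13 (n k : ℕ) (hn : 0 < n) (hk : k < n) :
    MeasureTheory.volume
        {x : Fin n → ℝ | (∀ i, x i ∈ Set.Icc (0 : ℝ) 1) ∧
          (k : ℝ) ≤ ∑ i, x i ∧ ∑ i, x i ≤ (k : ℝ) + 1}
      = (eulerian n k : ENNReal) / (Nat.factorial n : ENNReal) :=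
  stmt13_general n k hn
end

section
/- Let r_1 ≤ r_2 ≤ ... ≤ r_t be positive integers and set d = r_1 + ... + r_t + 1. For z = (z_1, ..., z_{t-1}) ∈ ℤ^{t-1}, the polytope P_z = {y ∈ [-1, 0]^d : z_i - 1 ≤ y_d + Σ_{j=1}^{r_t} y_{t,j} - Σ_{j'=1}^{r_i} y_{i,j'} ≤ z_i for all i ∈ [t-1]} is full-dimensional (has positive d-dimensional volume) if and only if z satisfies: -r_t ≤ z_i ≤ r_i for all i ∈ [t-1], and -r_j ≤ z_i - z_j ≤ r_i for all i, j ∈ [t-1]. -/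
open MeasureTheory Set

lemma seg_all_eq_neg_one {α : Type*} (s : Finset α) (f : α → ℝ)
    (h : ∀ a ∈ s, -1 ≤ f a) (hs : ∑ a ∈ s, f a ≤ -(s.card : ℝ)) :
    ∀ a ∈ s, f a = -1 := by
  by_contra hc
  push_neg at hc
  obtain ⟨a, ha, hne⟩ := hc
  have h2 : ∑ _a ∈ s, (-1 : ℝ) < ∑ a ∈ s, f a :=
    Finset.sum_lt_sum h ⟨a, ha, lt_of_le_of_ne (h a ha) (Ne.symm hne)⟩
  rw [Finset.sum_const, nsmul_eq_mul, mul_neg_one] at h2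
  linarith

lemma seg_all_eq_zero {α : Type*} (s : Finset α) (f : α → ℝ)
    (h : ∀ a ∈ s, f a ≤ 0) (hs : (0:ℝ) ≤ ∑ a ∈ s, f a) :
    ∀ a ∈ s, f a = 0 := by
  by_contra hc
  push_neg at hc
  obtain ⟨a, ha, hne⟩ := hc
  have h2 : ∑ a ∈ s, f a < ∑ _a ∈ s, (0 : ℝ) :=
    Finset.sum_lt_sum h ⟨a, ha, lt_of_le_of_ne (h a ha) hne⟩
  rw [Finset.sum_const, smul_zero] at h2
  linarith

lemma seg_null_last (t rt : ℕ) (r : Fin t → ℕ) (c : ℝ) :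
    volume {y : ((i : Fin t) → Fin (r i) → ℝ) × (Fin rt → ℝ) × ℝ | y.2.2 = c} = 0 := by
  have he : {y : ((i : Fin t) → Fin (r i) → ℝ) × (Fin rt → ℝ) × ℝ | y.2.2 = c}
      = (univ : Set ((i : Fin t) → Fin (r i) → ℝ)) ×ˢ ((univ : Set (Fin rt → ℝ)) ×ˢ ({c} : Set ℝ)) := by
    ext y; simp [Set.mem_prod, Prod.ext_iff, eq_comm]
  rw [he, Measure.volume_eq_prod, Measure.prod_prod, Measure.volume_eq_prod, Measure.prod_prod,
    Real.volume_singleton, mul_zero, mul_zero]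

lemma seg_null_mid (t rt : ℕ) (r : Fin t → ℕ) (j : Fin rt) (c : ℝ) :
    volume {y : ((i : Fin t) → Fin (r i) → ℝ) × (Fin rt → ℝ) × ℝ | y.2.1 j = c} = 0 := by
  have he : {y : ((i : Fin t) → Fin (r i) → ℝ) × (Fin rt → ℝ) × ℝ | y.2.1 j = c}
      = (univ : Set ((i : Fin t) → Fin (r i) → ℝ)) ×ˢ (({f : Fin rt → ℝ | f j = c}) ×ˢ (univ : Set ℝ)) := by
    ext y; simp [Set.mem_prod, Prod.ext_iff, eq_comm]
  have h0 : volume {f : Fin rt → ℝ | f j = c} = 0 := by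
    rw [volume_pi]; exact Measure.pi_hyperplane (fun _ => (volume : Measure ℝ)) j c
  rw [he, Measure.volume_eq_prod, Measure.prod_prod, Measure.volume_eq_prod, Measure.prod_prod, h0,
    zero_mul, mul_zero]

lemma seg_null_first (t rt : ℕ) (r : Fin t → ℕ) (i : Fin t) (j : Fin (r i)) (c : ℝ) :
    volume {y : ((i : Fin t) → Fin (r i) → ℝ) × (Fin rt → ℝ) × ℝ | y.1 i j = c} = 0 := by
  have he : {y : ((i : Fin t) → Fin (r i) → ℝ) × (Fin rt → ℝ) × ℝ | y.1 i j = c}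
      = ({g : (i : Fin t) → Fin (r i) → ℝ | g i j = c}) ×ˢ (univ : Set ((Fin rt → ℝ) × ℝ)) := by
    ext y; simp [Set.mem_prod, Prod.ext_iff, eq_comm]
  have h0 : volume {g : (i : Fin t) → Fin (r i) → ℝ | g i j = c} = 0 := by
    have h1 : volume {f : Fin (r i) → ℝ | f j = c} = 0 := by
      rw [volume_pi]; exact Measure.pi_hyperplane (fun _ => (volume : Measure ℝ)) j c
    have he2 : {g : (i : Fin t) → Fin (r i) → ℝ | g i j = c}
        = Function.eval i ⁻¹' {f : Fin (r i) → ℝ | f j = c} := rfl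
    rw [he2, volume_pi]
    exact Measure.pi_eval_preimage_null _ h1
  rw [he, Measure.volume_eq_prod, Measure.prod_prod, h0, zero_mul]

/-- Full-dimensionality of the conic cell `P_z` for the Segre product of
polynomial rings: coordinates are `y.1 i j` (`i` ranging over the first `t`
factors, of sizes `r i`), `y.2.1 j` (the last factor, of size `rt`), and the
last coordinate `y.2.2`. The cell has positive volume iff
`-rt ≤ z i ≤ r i` for all `i` and `-r j ≤ z i - z j ≤ r i` for all `i, j`. -/
theorem stmt18 (t rt : ℕ) (ht : 0 < t) (hrt : 0 < rt) (r : Fin t → ℕ)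
    (hrpos : ∀ i, 0 < r i) (hmono : Monotone r) (hle : ∀ i, r i ≤ rt)
    (z : Fin t → ℤ) :
    0 < MeasureTheory.volume
        {y : ((i : Fin t) → Fin (r i) → ℝ) × (Fin rt → ℝ) × ℝ |
          (∀ i j, y.1 i j ∈ Set.Icc (-1 : ℝ) 0) ∧
          (∀ j, y.2.1 j ∈ Set.Icc (-1 : ℝ) 0) ∧
          y.2.2 ∈ Set.Icc (-1 : ℝ) 0 ∧
          ∀ i, (z i : ℝ) - 1 ≤ y.2.2 + ∑ j, y.2.1 j - ∑ j', y.1 i j' ∧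
            y.2.2 + ∑ j, y.2.1 j - ∑ j', y.1 i j' ≤ (z i : ℝ)}
      ↔ ((∀ i, -(rt : ℤ) ≤ z i ∧ z i ≤ (r i : ℤ)) ∧
          ∀ i j, -((r j : ℤ)) ≤ z i - z j ∧ z i - z j ≤ (r i : ℤ)) := by
  haveI : Nonempty (Fin t) := ⟨⟨0, ht⟩⟩
  constructor
  · intro hvol
    -- generic bounds for a point of the set
    have key : ∀ y ∈ {y : ((i : Fin t) → Fin (r i) → ℝ) × (Fin rt → ℝ) × ℝ |
          (∀ i j, y.1 i j ∈ Set.Icc (-1 : ℝ) 0) ∧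
          (∀ j, y.2.1 j ∈ Set.Icc (-1 : ℝ) 0) ∧
          y.2.2 ∈ Set.Icc (-1 : ℝ) 0 ∧
          ∀ i, (z i : ℝ) - 1 ≤ y.2.2 + ∑ j, y.2.1 j - ∑ j', y.1 i j' ∧
            y.2.2 + ∑ j, y.2.1 j - ∑ j', y.1 i j' ≤ (z i : ℝ)},
        (∀ i, (-(r i : ℝ)) ≤ ∑ j', y.1 i j' ∧ ∑ j', y.1 i j' ≤ 0) ∧
        (-(rt : ℝ)) ≤ ∑ j, y.2.1 j ∧ ∑ j, y.2.1 j ≤ 0 := by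
      rintro y ⟨h1, h2, _h3, _h4⟩
      refine ⟨fun i => ⟨?_, Finset.sum_nonpos fun j _ => (h1 i j).2⟩, ?_,
        Finset.sum_nonpos fun j _ => (h2 j).2⟩
      · have := Finset.card_nsmul_le_sum Finset.univ (fun j' => y.1 i j') (-1 : ℝ)
          (fun j _ => (h1 i j).1)
        simpa [nsmul_eq_mul] using this
      · have := Finset.card_nsmul_le_sum Finset.univ (fun j => y.2.1 j) (-1 : ℝ)
          (fun j _ => (h2 j).1)
        simpa [nsmul_eq_mul] using this
    refine ⟨fun i => ⟨?_, ?_⟩, fun i j => ⟨?_, ?_⟩⟩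
    · -- -rt ≤ z i
      by_contra hcon
      have hz' : (z i : ℝ) ≤ -(rt : ℝ) - 1 := by
        have : z i ≤ -(rt:ℤ) - 1 := by omega
        exact_mod_cast this
      refine hvol.ne' (measure_mono_null ?_ (seg_null_mid t rt r ⟨0, hrt⟩ (-1)))
      rintro y hy
      obtain ⟨h1, h2, h3, h4⟩ := hy
      obtain ⟨hSi, hS1, hS2⟩ := key y ⟨h1, h2, h3, h4⟩
      have hSle : ∑ j, y.2.1 j ≤ -(rt : ℝ) := by
        have := (h4 i).2
        have := (hSi i).2
        have := h3.1
        linarith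
      have := seg_all_eq_neg_one Finset.univ (fun j => y.2.1 j) (fun j _ => (h2 j).1)
        (by simpa using hSle) ⟨0, hrt⟩ (Finset.mem_univ _)
      exact this
    · -- z i ≤ r i
      by_contra hcon
      have hz' : (r i : ℝ) ≤ (z i : ℝ) - 1 := by
        have : (r i : ℤ) ≤ z i - 1 := by omega
        have := (by exact_mod_cast this : (r i : ℝ) ≤ (z i : ℝ) - 1)
        exact this
      refine hvol.ne' (measure_mono_null ?_ (seg_null_last t rt r 0))
      rintro y hy
      obtain ⟨h1, h2, h3, h4⟩ := hy
      obtain ⟨hSi, hS1, hS2⟩ := key y ⟨h1, h2, h3, h4⟩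
      have := (h4 i).1
      have := (hSi i).1
      show y.2.2 = 0
      refine le_antisymm h3.2 (by linarith)
    · -- -(r j) ≤ z i - z j
      by_contra hcon
      have hz' : (z i : ℝ) - (z j : ℝ) ≤ -(r j : ℝ) - 1 := by
        have : z i - z j ≤ -(r j : ℤ) - 1 := by omega
        exact_mod_cast this
      refine hvol.ne' (measure_mono_null ?_ (seg_null_first t rt r j ⟨0, hrpos j⟩ (-1)))
      rintro y hy
      obtain ⟨h1, h2, h3, h4⟩ := hy
      obtain ⟨hSi, hS1, hS2⟩ := key y ⟨h1, h2, h3, h4⟩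
      have hi2 := (h4 i).2
      have hj1 := (h4 j).1
      have hle0 := (hSi i).2
      have hSj : ∑ j', y.1 j j' ≤ -(r j : ℝ) := by linarith
      exact seg_all_eq_neg_one Finset.univ (fun j' => y.1 j j') (fun k _ => (h1 j k).1)
        (by simpa using hSj) ⟨0, hrpos j⟩ (Finset.mem_univ _)
    · -- z i - z j ≤ r i
      by_contra hcon
      have hz' : (r i : ℝ) + 1 ≤ (z i : ℝ) - (z j : ℝ) := by
        have : (r i : ℤ) + 1 ≤ z i - z j := by omega
        exact_mod_cast this
      refine hvol.ne' (measure_mono_null ?_ (seg_null_first t rt r j ⟨0, hrpos j⟩ 0))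
      rintro y hy
      obtain ⟨h1, h2, h3, h4⟩ := hy
      obtain ⟨hSi, hS1, hS2⟩ := key y ⟨h1, h2, h3, h4⟩
      have hi1 := (h4 i).1
      have hj2 := (h4 j).2
      have hge := (hSi i).1
      have hSj : (0:ℝ) ≤ ∑ j', y.1 j j' := by linarith
      exact seg_all_eq_zero Finset.univ (fun j' => y.1 j j') (fun k _ => (h1 j k).2) hSj
        ⟨0, hrpos j⟩ (Finset.mem_univ _)
  · rintro ⟨hz1, hz2⟩
    have hrt' : (0:ℝ) < rt := by exact_mod_cast hrt
    have hr' : ∀ i, (0:ℝ) < r i := fun i => by exact_mod_cast hrpos i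
    -- choose the level w
    set A := Finset.univ.sup' Finset.univ_nonempty (fun i => (z i : ℝ) - r i - 1) with hA
    set B := Finset.univ.inf' Finset.univ_nonempty (fun i => (z i : ℝ)) with hB
    set L := max (-1 - (rt:ℝ)) A with hL
    set Uu := min 0 B with hUu
    have hzr : ∀ i, (z i : ℝ) ≤ r i := fun i => by exact_mod_cast (hz1 i).2
    have hzrt : ∀ i, -(rt:ℝ) ≤ z i := fun i => by exact_mod_cast (hz1 i).1
    have hzij : ∀ i j, (z i : ℝ) - z j ≤ r i := fun i j => by exact_mod_cast (hz2 i j).2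
    have hLU : L < Uu := by
      refine max_lt (lt_min (by linarith) ?_) (lt_min ?_ ?_)
      · rw [Finset.lt_inf'_iff]
        intro i _
        have := hzrt i; linarith
      · rw [Finset.sup'_lt_iff]
        intro i _
        have := hzr i; linarith
      · rw [Finset.sup'_lt_iff]
        intro i _
        rw [Finset.lt_inf'_iff]
        intro j _
        have := hzij i j; linarith
    set w := (L + Uu) / 2 with hw
    have hwL : L < w := by rw [hw]; linarith
    have hwU : w < Uu := by rw [hw]; linarith
    have hw1 : -1 - (rt:ℝ) < w := lt_of_le_of_lt (le_max_left _ _) hwL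
    have hw0 : w < 0 := lt_of_lt_of_le hwU (min_le_left _ _)
    have hwz : ∀ i, w < (z i : ℝ) := by
      intro i
      refine lt_of_lt_of_le hwU (le_trans (min_le_right _ _) ?_)
      rw [hB]
      exact Finset.inf'_le _ (Finset.mem_univ i)
    have hwz' : ∀ i, (z i : ℝ) - r i - 1 < w := by
      intro i
      refine lt_of_le_of_lt (le_trans ?_ (le_max_right (-1 - (rt:ℝ)) A)) hwL
      rw [hA]
      exact Finset.le_sup' (fun i => (z i : ℝ) - (r i : ℝ) - 1) (Finset.mem_univ i)
    -- the partial sums S i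
    set Si : Fin t → ℝ := fun i => (max (w - z i) (-(r i : ℝ)) + min (w - z i + 1) 0) / 2 with hSi
    have hmm : ∀ i, max (w - z i) (-(r i : ℝ)) < min (w - z i + 1) 0 := by
      intro i
      refine max_lt (lt_min (by linarith) (by have := hwz i; linarith))
        (lt_min (by have := hwz' i; linarith) (by have := hr' i; linarith))
    have hSi_lb : ∀ i, max (w - z i) (-(r i : ℝ)) < Si i := by
      intro i; have := hmm i; rw [hSi]; dsimp only; linarith
    have hSi_ub : ∀ i, Si i < min (w - z i + 1) 0 := by
      intro i; have := hmm i; rw [hSi]; dsimp only; linarith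
    have hSi_neg : ∀ i, Si i < 0 := fun i => lt_of_lt_of_le (hSi_ub i) (min_le_right _ _)
    have hSi_gt : ∀ i, -(r i : ℝ) < Si i := fun i => lt_of_le_of_lt (le_max_right _ _) (hSi_lb i)
    have hSi_a : ∀ i, w - z i < Si i := fun i => lt_of_le_of_lt (le_max_left _ _) (hSi_lb i)
    have hSi_b : ∀ i, Si i < w - z i + 1 := fun i => lt_of_lt_of_le (hSi_ub i) (min_le_left _ _)
    have h1rt : (0:ℝ) < 1 + rt := by linarith
    -- the witness point
    set p : ((i : Fin t) → Fin (r i) → ℝ) × (Fin rt → ℝ) × ℝ :=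
      (fun i _ => Si i / r i, fun _ => w / (1 + rt), w / (1 + rt)) with hp
    set V := {y : ((i : Fin t) → Fin (r i) → ℝ) × (Fin rt → ℝ) × ℝ |
          (∀ i j, y.1 i j ∈ Set.Ioo (-1 : ℝ) 0) ∧
          (∀ j, y.2.1 j ∈ Set.Ioo (-1 : ℝ) 0) ∧
          y.2.2 ∈ Set.Ioo (-1 : ℝ) 0 ∧
          ∀ i, y.2.2 + ∑ j, y.2.1 j - ∑ j', y.1 i j' ∈ Set.Ioo ((z i : ℝ) - 1) (z i)} with hVdef
    have hsub : V ⊆ {y : ((i : Fin t) → Fin (r i) → ℝ) × (Fin rt → ℝ) × ℝ |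
          (∀ i j, y.1 i j ∈ Set.Icc (-1 : ℝ) 0) ∧
          (∀ j, y.2.1 j ∈ Set.Icc (-1 : ℝ) 0) ∧
          y.2.2 ∈ Set.Icc (-1 : ℝ) 0 ∧
          ∀ i, (z i : ℝ) - 1 ≤ y.2.2 + ∑ j, y.2.1 j - ∑ j', y.1 i j' ∧
            y.2.2 + ∑ j, y.2.1 j - ∑ j', y.1 i j' ≤ (z i : ℝ)} := by
      rintro y ⟨a, b, c, d⟩
      exact ⟨fun i j => ⟨(a i j).1.le, (a i j).2.le⟩, fun j => ⟨(b j).1.le, (b j).2.le⟩,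
        ⟨c.1.le, c.2.le⟩, fun i => ⟨(d i).1.le, (d i).2.le⟩⟩
    have hopen : IsOpen V := by
      have hVeq : V
          = (⋂ i, ⋂ j, (fun y : ((i : Fin t) → Fin (r i) → ℝ) × (Fin rt → ℝ) × ℝ => y.1 i j) ⁻¹' Ioo (-1:ℝ) 0) ∩
            ((⋂ j, (fun y : ((i : Fin t) → Fin (r i) → ℝ) × (Fin rt → ℝ) × ℝ => y.2.1 j) ⁻¹' Ioo (-1:ℝ) 0) ∩
            (((fun y : ((i : Fin t) → Fin (r i) → ℝ) × (Fin rt → ℝ) × ℝ => y.2.2) ⁻¹' Ioo (-1:ℝ) 0) ∩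
            (⋂ i, (fun y : ((i : Fin t) → Fin (r i) → ℝ) × (Fin rt → ℝ) × ℝ =>
              y.2.2 + ∑ j, y.2.1 j - ∑ j', y.1 i j') ⁻¹' Ioo ((z i:ℝ) - 1) (z i)))) := by
        rw [hVdef]; ext y; simp [Set.mem_iInter]
      rw [hVeq]
      refine IsOpen.inter (isOpen_iInter_of_finite fun i => isOpen_iInter_of_finite fun j =>
          isOpen_Ioo.preimage (by fun_prop)) (IsOpen.inter (isOpen_iInter_of_finite fun j =>
          isOpen_Ioo.preimage (by fun_prop)) (IsOpen.inter (isOpen_Ioo.preimage (by fun_prop))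
          (isOpen_iInter_of_finite fun i => isOpen_Ioo.preimage (by fun_prop))))
    have hpV : p ∈ V := by
      have hcoord1 : ∀ i : Fin t, Si i / r i ∈ Ioo (-1:ℝ) 0 := by
        intro i
        constructor
        · rw [lt_div_iff₀ (hr' i)]
          have := hSi_gt i; linarith
        · exact div_neg_of_neg_of_pos (hSi_neg i) (hr' i)
      have hcoord2 : w / (1 + (rt:ℝ)) ∈ Ioo (-1:ℝ) 0 := by
        constructor
        · rw [lt_div_iff₀ h1rt]; linarith
        · exact div_neg_of_neg_of_pos hw0 h1rt
      have hsum2 : ∑ _j : Fin rt, w / (1 + (rt:ℝ)) = (rt:ℝ) * (w / (1 + rt)) := by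
        rw [Finset.sum_const, nsmul_eq_mul]
        simp
      have hsum1 : ∀ i : Fin t, ∑ _j : Fin (r i), Si i / (r i : ℝ) = Si i := by
        intro i
        rw [Finset.sum_const, nsmul_eq_mul]
        simp only [Finset.card_univ, Fintype.card_fin]
        field_simp
        exact mul_div_cancel_left₀ _ (ne_of_gt (hr' i))
      have hkey : w / (1 + (rt:ℝ)) + (rt:ℝ) * (w / (1 + rt)) = w := by
        field_simp
      rw [hVdef]
      refine ⟨fun i j => hcoord1 i, fun j => hcoord2, hcoord2, fun i => ?_⟩
      show p.2.2 + ∑ j, p.2.1 j - ∑ j', p.1 i j' ∈ Ioo ((z i:ℝ) - 1) (z i)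
      have : p.2.2 + ∑ j, p.2.1 j - ∑ j', p.1 i j' = w - Si i := by
        rw [hp]
        dsimp only
        rw [hsum2, hsum1 i, hkey]
      rw [this]
      constructor
      · have := hSi_b i; linarith
      · have := hSi_a i; linarith
    calc (0:ENNReal) < volume V := hopen.measure_pos volume ⟨p, hpV⟩
      _ ≤ _ := measure_mono hsub
end
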